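/- arXiv:2208.00366 — 4 statements merged into one kernel-verified Lean document; each statement's English description precedes it below -/
import Mathlib

section
/- For every integer d ≥ 2, the infimum of the asymptotic critical exponent over all uniformly recurrent sequences over a d-letter alphabet equals 1; consequently RT*(d) := inf{E*(u) : u a sequence over a d-letter alphabet} = 1 for every d ≥ 2. -/
open Filter Topology Matrix
open scoped ENNReal

namespace Paper

variable {A : Type*}

/-- The factor of `u` of length `len` starting at position `i`. -/
def factorAt (u : ℕ → A) (i len : ℕ) : List A :=
  (List.range len).map fun k => u (i + k)

/-- The word `w` occurs in `u` at position `i`. -/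
def OccursAt (u : ℕ → A) (w : List A) (i : ℕ) : Prop :=
  w = factorAt u i w.length

/-- `w` is a factor of the sequence `u`. -/
def IsFactor (u : ℕ → A) (w : List A) : Prop :=
  ∃ i, OccursAt u w i

/-- `u` is recurrent: every factor occurs infinitely often. -/
def Recurrent (u : ℕ → A) : Prop :=
  ∀ w, IsFactor u w → ∀ N, ∃ i, N ≤ i ∧ OccursAt u w i

/-- `u` is uniformly recurrent: every factor occurs in every window of some fixed length. -/
def UniformlyRecurrent (u : ℕ → A) : Prop :=
  ∀ w, IsFactor u w → ∃ R, ∀ i, ∃ j, i ≤ j ∧ j < i + R ∧ OccursAt u w j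

/-- `u` is eventually periodic. -/
def EventuallyPeriodic (u : ℕ → A) : Prop :=
  ∃ p, 0 < p ∧ ∃ N, ∀ n, N ≤ n → u (n + p) = u n

/-- `u` is balanced: counts of each letter in equal-length factors differ by at most 1. -/
def IsBalanced [DecidableEq A] (u : ℕ → A) : Prop :=
  ∀ (c : A) (w w' : List A), IsFactor u w → IsFactor u w' → w.length = w'.length →
    (w.count c : ℤ) - (w'.count c : ℤ) ≤ 1

/-- `w^{n/|w|}`, i.e. the prefix of length `n` of `w^ω`, is a factor of `u`
(for a nonempty word `w`). -/
def HasPowerFactor (u : ℕ → A) (w : List A) (n : ℕ) : Prop :=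
  w ≠ [] ∧ ∃ i, ∀ k, k < n → u (i + k) = w.getD (k % w.length) (u i)

/-- The critical exponent `E(u)`. -/
noncomputable def critExp (u : ℕ → A) : ℝ≥0∞ :=
  sSup {e | ∃ w n, HasPowerFactor u w n ∧ e = (n : ℝ≥0∞) / (w.length : ℝ≥0∞)}

/-- The maximal exponent of a repetition whose root has length `l`. -/
noncomputable def maxExpLen (u : ℕ → A) (l : ℕ) : ℝ≥0∞ :=
  sSup {e | ∃ w n, (w : List A).length = l ∧ HasPowerFactor u w n ∧
    e = (n : ℝ≥0∞) / (l : ℝ≥0∞)}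

/-- The asymptotic critical exponent `E*(u)`. -/
noncomputable def acritExp (u : ℕ → A) : ℝ≥0∞ :=
  if critExp u = ⊤ then ⊤ else Filter.limsup (fun l => maxExpLen u l) Filter.atTop

/-- `w` is a right special factor of `u`. -/
def RightSpecial (u : ℕ → A) (w : List A) : Prop :=
  ∃ c c' : A, c ≠ c' ∧ IsFactor u (w ++ [c]) ∧ IsFactor u (w ++ [c'])

/-- `w` is a left special factor of `u`. -/
def LeftSpecial (u : ℕ → A) (w : List A) : Prop :=
  ∃ c c' : A, c ≠ c' ∧ IsFactor u (c :: w) ∧ IsFactor u (c' :: w)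

/-- `w` is a bispecial factor of `u`. -/
def Bispecial (u : ℕ → A) (w : List A) : Prop := LeftSpecial u w ∧ RightSpecial u w

/-- `r` is a return word to `w` in `u`: the word between two consecutive occurrences of `w`. -/
def IsReturnWord (u : ℕ → A) (w r : List A) : Prop :=
  ∃ i j, i < j ∧ OccursAt u w i ∧ OccursAt u w j ∧
    (∀ t, i < t → t < j → ¬ OccursAt u w t) ∧ r = factorAt u i (j - i)

/-- A Sturmian sequence: an aperiodic balanced sequence over the binary
alphabet `Bool` (`false` = letter a, `true` = letter b). -/
def IsSturmian (u : ℕ → Bool) : Prop :=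
  ¬ EventuallyPeriodic u ∧ IsBalanced u

/-- Prepend a letter to a sequence. -/
def prepend (c : A) (u : ℕ → A) : ℕ → A
  | 0 => c
  | n + 1 => u n

/-- A standard Sturmian sequence: `u`, `a·u` and `b·u` are all Sturmian. -/
def IsStandard (u : ℕ → Bool) : Prop :=
  IsSturmian u ∧ IsSturmian (prepend false u) ∧ IsSturmian (prepend true u)

/-- The letter `c` has frequency `ρ` in `u`. -/
def HasFreq [DecidableEq A] (u : ℕ → A) (c : A) (ρ : ℝ) : Prop :=
  Tendsto (fun n => ((factorAt u 0 n).count c : ℝ) / n) atTop (𝓝 ρ)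

/-- `u` has slope `θ = ρ_a(u)/ρ_b(u)`, with `b = true` the most frequent letter. -/
def HasSlope (u : ℕ → Bool) (θ : ℝ) : Prop :=
  ∃ ρa ρb : ℝ, HasFreq u false ρa ∧ HasFreq u true ρb ∧ ρa < ρb ∧ θ = ρa / ρb

/-- `cfP a N` is the numerator `p_{N-1}` of the convergents of the continued
fraction `[0; a 1, a 2, …]` (index shifted by one: `cfP a 0 = p_{-1} = 1`). -/
def cfP (a : ℕ → ℕ) : ℕ → ℕ
  | 0 => 1
  | 1 => 0
  | n + 2 => a (n + 1) * cfP a (n + 1) + cfP a n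

/-- `cfQ a N` is the denominator `q_{N-1}` of the convergents of the continued
fraction `[0; a 1, a 2, …]` (index shifted by one: `cfQ a 0 = q_{-1} = 0`). -/
def cfQ (a : ℕ → ℕ) : ℕ → ℕ
  | 0 => 0
  | 1 => 1
  | n + 2 => a (n + 1) * cfQ a (n + 1) + cfQ a n

/-- The value of the continued fraction `[0; a 1, a 2, …]`, as the limit of its
convergents `p_N / q_N`. -/
noncomputable def cfValue (a : ℕ → ℕ) : ℝ :=
  limUnder atTop fun N => (cfP a (N + 1) : ℝ) / (cfQ a (N + 1) : ℝ)

/-- `δ_N = [a_{N+1}; a_{N+2}, …]`, the inverse of the value of the shifted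
continued fraction `[0; a_{N+1}, a_{N+2}, …]`. -/
noncomputable def cfDelta (a : ℕ → ℕ) (N : ℕ) : ℝ :=
  (cfValue fun n => a (n + N))⁻¹

/-- `Q_{N-1} = p_{N-1} + q_{N-1}` (shifted index as in `cfP`, `cfQ`). -/
def cfQpair (a : ℕ → ℕ) (N : ℕ) : ℕ := cfP a N + cfQ a N

/-- The matrix `A_N` with rows `(p_{N-1}, p_N)` and `(q_{N-1}, q_N)`. -/
def cfMat (a : ℕ → ℕ) (N : ℕ) : Matrix (Fin 2) (Fin 2) ℤ :=
  !![(cfP a N : ℤ), (cfP a (N + 1) : ℤ); (cfQ a N : ℤ), (cfQ a (N + 1) : ℤ)]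

/-- The colouring of a binary sequence `u` by `y` (on the letter `a = false`) and
`y'` (on the letter `b = true`). -/
def colour (u : ℕ → Bool) (y y' : ℕ → A) (n : ℕ) : A :=
  if u n then y' ((List.range n).countP fun k => u k)
  else y ((List.range n).countP fun k => !u k)

/-- Colouring of a finite binary word by the sequences `y` and `y'`. -/
def colourWord : (ℕ → A) → (ℕ → A) → List Bool → List A
  | _, _, [] => []
  | y, y', c :: w =>
      if c then y' 0 :: colourWord y (fun n => y' (n + 1)) w
      else y 0 :: colourWord (fun n => y (n + 1)) y' w

/-- A constant gap sequence: every occurring letter occurs with a constant gap. -/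
def IsConstantGap (y : ℕ → A) : Prop :=
  ∀ c : A, (∃ n, y n = c) →
    ∃ g, 0 < g ∧ ∀ n, y n = c →
      y (n + g) = c ∧ ∀ t, 0 < t → t < g → y (n + t) ≠ c

/-- The minimal period of a sequence. -/
noncomputable def minPeriod (y : ℕ → A) : ℕ :=
  sInf {p | 0 < p ∧ ∀ n, y (n + p) = y n}

/-- `d` is a derived sequence of `u` to the factor `z`: coding (by a binary
alphabet, via an injective labelling `f` of return words) of the decomposition
of `u` into return words to `z`. -/
def IsDerivedSeq (u : ℕ → Bool) (z : List Bool) (d : ℕ → Bool) : Prop :=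
  ∃ (occ : ℕ → ℕ) (f : Bool → List Bool),
    StrictMono occ ∧ (∀ n, OccursAt u z (occ n)) ∧
    (∀ i, OccursAt u z i → ∃ n, occ n = i) ∧
    f true ≠ f false ∧
    ∀ n, factorAt u (occ n) (occ (n + 1) - occ n) = f (d n)

/-- The equivalence of unimodular matrices: `M ≡ M'` iff `diag(c,c')·M ≡ M'`
with the first row mod `Y` and the second row mod `Y'`, for some `c` coprime
with `Y` and `c'` coprime with `Y'`. -/
def MatEquiv (Y Y' : ℕ) (M M' : Matrix (Fin 2) (Fin 2) ℤ) : Prop :=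
  ∃ c c' : ℤ, IsCoprime c (Y : ℤ) ∧ IsCoprime c' (Y' : ℤ) ∧
    (∀ j, (Y : ℤ) ∣ (c * M 0 j - M' 0 j)) ∧
    (∀ j, (Y' : ℤ) ∣ (c' * M 1 j - M' 1 j))

/-- `δ > 1` is `(1+β)`-forcing for (the class of) the matrix `M`, with respect to
the periods `P`, `P'`. -/
def IsForcing (β : ℝ) (P P' : ℕ) (M : Matrix (Fin 2) (Fin 2) ℤ) (δ : ℝ) : Prop :=
  1 < δ ∧ ∃ m k l : ℕ, 0 < k + l ∧
    -- (P1)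
    ((P : ℤ) ∣ (M 0 0 * (l : ℤ) + M 0 1 * ((m : ℤ) * l + k)) ∧
     (P' : ℤ) ∣ (M 1 0 * (l : ℤ) + M 1 1 * ((m : ℤ) * l + k))) ∧
    -- (P2)
    ((m : ℝ) + 1 < δ ∧ |(l : ℝ) * (δ - m) - k| < δ - m + 1) ∧
    -- (P3)
    ((k = l → β < 1 / (k : ℝ)) ∧
     (l < k → β ≤ (1 + (m : ℝ)) / ((k : ℝ) + m * l)) ∧
     (k < l → β ≤ (2 + (m : ℝ)) / ((k : ℝ) + (m + 1) * l)))

/-- The set `F(β, M)` of `(1+β)`-forcing `δ`'s. -/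
def ForcingSet (β : ℝ) (P P' : ℕ) (M : Matrix (Fin 2) (Fin 2) ℤ) : Set ℝ :=
  {δ | IsForcing β P P' M δ}

/-- The set `D(β, M) = {δ > 1 : δ is not in the closure of F(β, M)}`. -/
def DSet (β : ℝ) (P P' : ℕ) (M : Matrix (Fin 2) (Fin 2) ℤ) : Set ℝ :=
  {δ | 1 < δ ∧ δ ∉ closure (ForcingSet β P P' M)}

/-- The finite Fibonacci words: fixed-point prefixes of `b ↦ ba`, `a ↦ b`,
where `b = true`, `a = false`. -/
def fibList : ℕ → List Bool
  | 0 => [true]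
  | 1 => [true, false]
  | n + 2 => fibList (n + 1) ++ fibList n

/-- The Fibonacci sequence, the fixed point of `b ↦ ba`, `a ↦ b`. -/
def fibWord (n : ℕ) : Bool := (fibList (n + 2)).getD n true

end Paper

/-!
Every word is a repetition of exponent `1` of itself, so `E*(u) ≥ 1`. For the upper bound fix
`m ≥ 2` and let `r` be the generalized Rudin–Shapiro sequence over `(ℤ/m)²`, the fixed point of
the `m`-uniform substitution `σ ↦ (j, σ₂ + j σ₁)_{j < m}`. The images of two distinct letters
differ at one of any two consecutive positions. As `(r n)₁ = n mod m`, `r n ≠ r (n + h)` whenever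
`m ∤ h`, and inductively the mismatches `r n ≠ r (n + h m^(k+1))` occur in every window of
length `6 m^k`. Coding the letters by comma-free binary blocks gives a binary sequence in which,
at every shift `l`, mismatches occur in every window of length about `6 l / m + C`; so a
repetition of period `l` is shorter than `l + 6 l / m + C`, and `E*(u) ≤ 1 + 7 / m`. Uniform
recurrence holds since a prefix of `r` of length `< m^K` reappears at every position
`m^(K+1) a` with `(r a)₂ = 0`, and such `a` occur with bounded gaps.
-/

namespace Paper

variable {α β : Type*}

theorem mul_add_div_of_lt {t L o : ℕ} (h : o < L) : (t * L + o) / L = t := by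
  rw [Nat.add_comm, Nat.add_mul_div_right _ _ (by omega), Nat.div_eq_of_lt h, zero_add]

def Syndetic (p : ℕ → Prop) (R : ℕ) : Prop :=
  ∀ y, ∃ a, y ≤ a ∧ a < y + R ∧ p a

namespace Syndetic

variable {p q : ℕ → Prop} {R : ℕ}

theorem of_forall (h : ∀ a, p a) : Syndetic p 1 := fun y => ⟨y, le_rfl, by omega, h y⟩

theorem mono {R' : ℕ} (h : Syndetic p R) (hpq : ∀ a, p a → q a) (hR : R ≤ R') :
    Syndetic q R' := fun y =>
  let ⟨a, hya, hay, ha⟩ := h y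
  ⟨a, hya, by omega, hpq a ha⟩

theorem of_or_succ (h : Syndetic (fun a => p a ∨ p (a + 1)) R) : Syndetic p (R + 1) := by
  intro y
  obtain ⟨a, hya, hay, ha | ha⟩ := h y
  · exact ⟨a, hya, by omega, ha⟩
  · exact ⟨a + 1, by omega, by omega, ha⟩

theorem mul_add {P : ℕ} (h : Syndetic p R) (hpq : ∀ a, p a → ∃ o < P, q (a * P + o)) :
    Syndetic q ((R + 1) * P) := by
  intro y
  obtain ⟨a, hya, hay, ha⟩ := h (y / P + 1)
  obtain ⟨o, hoP, hq⟩ := hpq a ha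
  have hy : y < (y / P + 1) * P := by
    rw [add_one_mul]; exact Nat.lt_div_mul_add (by omega)
  have h1 : (y / P + 1) * P ≤ a * P := Nat.mul_le_mul_right P hya
  have h2 : (a + 1) * P ≤ (y / P + 1 + R) * P := Nat.mul_le_mul_right P (by omega)
  have h3 : (y / P) * P ≤ y := Nat.div_mul_le_self y P
  refine ⟨a * P + o, by omega, ?_, hq⟩
  simp only [add_mul, one_mul] at h1 h2 ⊢
  omega

end Syndetic

def MismatchGap (u : ℕ → α) (l G : ℕ) : Prop :=
  Syndetic (fun j => u j ≠ u (j + l)) G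

theorem MismatchGap.comp {u : ℕ → α} {l G : ℕ} (h : MismatchGap u l G) {f : α → β}
    (hf : Function.Injective f) : MismatchGap (f ∘ u) l G :=
  h.mono (fun _ hj => hf.ne hj) le_rfl

def PrefixesSyndetic (u : ℕ → α) : Prop :=
  ∀ N, ∃ R, Syndetic (fun s => ∀ n < N, u (s + n) = u n) R

theorem PrefixesSyndetic.comp {u : ℕ → α} (h : PrefixesSyndetic u) (f : α → β) :
    PrefixesSyndetic (f ∘ u) := fun N =>
  let ⟨R, hR⟩ := h N
  ⟨R, hR.mono (fun _ hs n hn => congrArg f (hs n hn)) le_rfl⟩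

theorem PrefixesSyndetic.uniformlyRecurrent {u : ℕ → α} (h : PrefixesSyndetic u) :
    UniformlyRecurrent u := by
  rintro w ⟨i, hi⟩
  obtain ⟨R, hR⟩ := h (i + w.length)
  refine ⟨R + i, fun y => ?_⟩
  obtain ⟨s, hys, hsy, hs⟩ := hR y
  refine ⟨s + i, by omega, by omega, ?_⟩
  rw [OccursAt, hi, factorAt, factorAt, List.length_map, List.length_range]
  refine List.map_congr_left fun k hk => ?_
  rw [add_assoc, hs (i + k) (by simp at hk; omega)]

theorem HasPowerFactor.lt_add {u : ℕ → α} {w : List α} {n G : ℕ} (h : HasPowerFactor u w n)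
    (hG : MismatchGap u w.length G) : n < w.length + G := by
  obtain ⟨-, i, hi⟩ := h
  obtain ⟨j, hij, hji, hj⟩ := hG i
  by_contra! hn
  apply hj
  obtain ⟨k, rfl⟩ := Nat.exists_eq_add_of_le hij
  rw [hi k (by omega), add_assoc, hi (k + w.length) (by omega), Nat.add_mod_right]

theorem natCast_div_le_natCast_div {a b c d : ℕ} (hb : b ≠ 0) (hd : d ≠ 0) (h : a * d ≤ c * b) :
    (a : ℝ≥0∞) / b ≤ (c : ℝ≥0∞) / d :=
  calc (a : ℝ≥0∞) / b = ((a * d : ℕ) : ℝ≥0∞) / (b * d : ℕ) := by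
        push_cast; rw [ENNReal.mul_div_mul_right _ _ (by simpa) (by simp)]
    _ ≤ ((c * b : ℕ) : ℝ≥0∞) / (b * d : ℕ) := by gcongr
    _ = c / d := by
        push_cast; rw [mul_comm (b : ℝ≥0∞), ENNReal.mul_div_mul_right _ _ (by simpa) (by simp)]

theorem one_le_acritExp (u : ℕ → α) : 1 ≤ acritExp u := by
  unfold acritExp
  split_ifs
  · exact le_top
  refine le_limsup_of_frequently_le (Eventually.frequently ?_) (by isBoundedDefault)
  filter_upwards [eventually_ge_atTop 1] with l hl
  have hprefix : HasPowerFactor u (factorAt u 0 l) l := by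
    refine ⟨by simp [factorAt]; omega, 0, fun k hk => ?_⟩
    simp [factorAt, Nat.mod_eq_of_lt hk, hk]
  calc (1 : ℝ≥0∞) = (l : ℝ≥0∞) / l := (ENNReal.div_self (by simp; omega) (by simp)).symm
    _ ≤ maxExpLen u l := le_sSup ⟨_, l, by simp [factorAt], hprefix, rfl⟩

theorem acritExp_le_of_mismatchGap {u : ℕ → α} {m c C : ℕ} (hm : m ≠ 0)
    (h : ∀ l, 0 < l → ∃ G, m * G ≤ c * l + C ∧ MismatchGap u l G) :
    acritExp u ≤ ((m + c + 1 : ℕ) : ℝ≥0∞) / m := by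
  have hpow : ∀ w n, HasPowerFactor u w n → m * n < (m + c) * w.length + C := by
    intro w n hwn
    obtain ⟨G, hGm, hG⟩ := h w.length (List.length_pos_iff.mpr hwn.1)
    have := Nat.mul_lt_mul_of_pos_left (hwn.lt_add hG) (Nat.pos_of_ne_zero hm)
    rw [mul_add] at this
    rw [add_mul]
    omega
  have hcrit : critExp u ≠ ⊤ := by
    refine ne_top_of_le_ne_top (ENNReal.div_lt_top (y := m) (ENNReal.natCast_ne_top (m + c + C))
      (by simpa)).ne (sSup_le ?_)
    rintro e ⟨w, n, hwn, rfl⟩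
    have hw : w.length ≠ 0 := by simpa using hwn.1
    refine natCast_div_le_natCast_div hw hm ?_
    have := hpow w n hwn
    have : C ≤ C * w.length := Nat.le_mul_of_pos_right C (Nat.pos_of_ne_zero hw)
    rw [add_mul, mul_comm n]
    omega
  rw [acritExp, if_neg hcrit]
  refine limsup_le_of_le (by isBoundedDefault) ?_
  filter_upwards [eventually_ge_atTop (C + 1)] with l hl
  refine sSup_le ?_
  rintro e ⟨w, n, rfl, hwn, rfl⟩
  refine natCast_div_le_natCast_div (by omega) hm ?_
  have := hpow w n hwn
  rw [add_mul (m + c), mul_comm n]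
  omega

theorem sInf_eq_one_of_forall_le_div {S : Set ℝ≥0∞} (c : ℕ) (h1 : ∀ x ∈ S, 1 ≤ x)
    (h2 : ∀ m, 2 ≤ m → ∃ x ∈ S, x ≤ ((m + c : ℕ) : ℝ≥0∞) / m) : sInf S = 1 := by
  refine le_antisymm ?_ (le_sInf h1)
  have hlim : Tendsto (fun m : ℕ => ((m + c : ℕ) : ℝ≥0∞) / m) atTop (𝓝 1) := by
    have := (ENNReal.Tendsto.const_mul (a := (c : ℝ≥0∞)) ENNReal.tendsto_inv_nat_nhds_zero
      (Or.inr (by simp))).const_add 1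
    rw [mul_zero, add_zero] at this
    refine this.congr' ?_
    filter_upwards [eventually_ne_atTop 0] with m hm
    rw [Nat.cast_add, ENNReal.add_div, ENNReal.div_self (by simpa) (by simp), div_eq_mul_inv]
  refine ge_of_tendsto hlim ?_
  filter_upwards [eventually_ge_atTop 2] with m hm
  obtain ⟨x, hx, hxm⟩ := h2 m hm
  exact (sInf_le hx).trans hxm

def rsStep (m : ℕ) (j : ZMod m) (σ : ZMod m × ZMod m) : ZMod m × ZMod m :=
  (j, σ.2 + j * σ.1)

theorem rsStep_pair_injective {m : ℕ} {j : ZMod m} {σ σ' : ZMod m × ZMod m}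
    (h₀ : rsStep m j σ = rsStep m j σ') (h₁ : rsStep m (j + 1) σ = rsStep m (j + 1) σ') :
    σ = σ' := by
  simp only [rsStep, Prod.mk.injEq, true_and] at h₀ h₁
  have h₂ : σ.1 = σ'.1 := by linear_combination h₁ - h₀
  exact Prod.ext h₂ (by linear_combination h₀ - j * h₂)

/-- `rsSeq m n = (n₀, n₀ n₁ + n₁ n₂ + ⋯)` modulo `m`, where `n₀ n₁ ⋯` are the base-`m` digits
of `n`: the fixed point of the `m`-uniform substitution `σ ↦ rsStep m 0 σ ⋯ rsStep m (m - 1) σ`,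
a generalized Rudin–Shapiro sequence. -/
def rsSeq (m n : ℕ) : ZMod m × ZMod m :=
  if h : 2 ≤ m ∧ 0 < n then
    have := Nat.div_lt_self h.2 h.1
    rsStep m n (rsSeq m (n / m))
  else 0

section rsSeq

variable {m : ℕ}

theorem rsSeq_zero : rsSeq m 0 = 0 := by
  rw [rsSeq]; simp

theorem rsSeq_eq (hm : 2 ≤ m) (n : ℕ) : rsSeq m n = rsStep m n (rsSeq m (n / m)) := by
  rcases Nat.eq_zero_or_pos n with rfl | hn
  · simp [rsSeq_zero, rsStep, Prod.zero_eq_mk]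
  · rw [rsSeq, dif_pos ⟨hm, hn⟩]

theorem rsSeq_mul_add (hm : 2 ≤ m) (t : ℕ) {j : ℕ} (hj : j < m) :
    rsSeq m (t * m + j) = rsStep m j (rsSeq m t) := by
  rw [rsSeq_eq hm, mul_add_div_of_lt hj]
  simp

theorem rsSeq_fst (hm : 2 ≤ m) (n : ℕ) : (rsSeq m n).1 = n := by
  rw [rsSeq_eq hm]; rfl

theorem rsSeq_ne_add {h : ℕ} (hm : 2 ≤ m) (hh : ¬ m ∣ h) (t : ℕ) : rsSeq m t ≠ rsSeq m (t + h) := by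
  intro heq
  have := congrArg Prod.fst heq
  rw [rsSeq_fst hm, rsSeq_fst hm, Nat.cast_add, left_eq_add, ZMod.natCast_eq_zero_iff] at this
  exact hh this

theorem rsSeq_mul_add_ne_or (hm : 2 ≤ m) {Λ t : ℕ} (ht : rsSeq m t ≠ rsSeq m (t + Λ)) {j : ℕ}
    (hj : j + 1 < m) :
    rsSeq m (t * m + j) ≠ rsSeq m (t * m + j + Λ * m) ∨
      rsSeq m (t * m + j + 1) ≠ rsSeq m (t * m + j + 1 + Λ * m) := by
  have hshift : ∀ i, t * m + i + Λ * m = (t + Λ) * m + i := fun i => by ring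
  rw [hshift, add_assoc, hshift, rsSeq_mul_add hm t (by omega), rsSeq_mul_add hm t hj,
    rsSeq_mul_add hm _ (by omega), rsSeq_mul_add hm _ hj, Nat.cast_add, Nat.cast_one]
  by_contra! h
  exact ht (rsStep_pair_injective h.1 h.2)

theorem mismatchGap_rsSeq_mul (hm : 2 ≤ m) {h : ℕ} (hh : ¬ m ∣ h) :
    MismatchGap (rsSeq m) (h * m) 3 := by
  refine Syndetic.of_or_succ fun y => ?_
  have hy := Nat.div_add_mod' y m
  by_cases hj : y % m + 1 < m
  · refine ⟨y, le_rfl, by omega, ?_⟩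
    have := rsSeq_mul_add_ne_or hm (rsSeq_ne_add hm hh (y / m)) hj
    rwa [hy] at this
  · refine ⟨y + 1, by omega, by omega, ?_⟩
    have hy' : y + 1 = (y / m + 1) * m + 0 := by
      have := Nat.mod_lt y (by omega : 0 < m)
      rw [add_mul]; omega
    have := rsSeq_mul_add_ne_or hm (rsSeq_ne_add hm hh (y / m + 1)) (j := 0) (by omega)
    rwa [← hy'] at this

theorem MismatchGap.rsSeq_mul (hm : 2 ≤ m) {Λ G : ℕ} (h : MismatchGap (rsSeq m) Λ G) :
    MismatchGap (rsSeq m) (Λ * m) ((G + 1) * m + 1) :=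
  Syndetic.of_or_succ <| Syndetic.mul_add h fun _ ht =>
    ⟨0, by omega, rsSeq_mul_add_ne_or hm ht (by omega)⟩

theorem mismatchGap_rsSeq_mul_pow (hm : 2 ≤ m) {h : ℕ} (hh : ¬ m ∣ h) (k : ℕ) :
    ∃ G, G + 3 ≤ 6 * m ^ k ∧ MismatchGap (rsSeq m) (h * m ^ (k + 1)) G := by
  induction k with
  | zero => exact ⟨3, by simp, by simpa using mismatchGap_rsSeq_mul hm hh⟩
  | succ k ih =>
    obtain ⟨G, hG, hgap⟩ := ih
    refine ⟨(G + 1) * m + 1, ?_, by simpa [pow_succ, mul_assoc] using hgap.rsSeq_mul hm⟩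
    have := Nat.mul_le_mul_right m hG
    rw [pow_succ, ← mul_assoc]
    simp only [add_mul] at this ⊢
    omega

theorem exists_mismatchGap_rsSeq (hm : 2 ≤ m) {Λ : ℕ} (hΛ : 0 < Λ) :
    ∃ G, m * G ≤ 6 * Λ + m ∧ MismatchGap (rsSeq m) Λ G := by
  obtain ⟨b, h, hh, rfl⟩ := Nat.exists_eq_pow_mul_and_not_dvd hΛ.ne' m (by omega)
  cases b with
  | zero =>
    exact ⟨1, by omega, Syndetic.of_forall fun y => by simpa using rsSeq_ne_add hm hh y⟩
  | succ k =>
    obtain ⟨G, hG, hgap⟩ := mismatchGap_rsSeq_mul_pow hm hh k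
    refine ⟨G, ?_, by rwa [mul_comm]⟩
    have h1 := Nat.mul_le_mul_left m hG
    have h2 : m ^ (k + 1) ≤ m ^ (k + 1) * h :=
      Nat.le_mul_of_pos_right _ (Nat.pos_of_ne_zero fun h0 => hh (h0 ▸ dvd_zero m))
    rw [pow_succ] at h2 ⊢
    nlinarith

theorem rsSeq_add_pow_mul (hm : 2 ≤ m) {a : ℕ} (ha : (rsSeq m a).2 = 0) {K t : ℕ}
    (ht : t < m ^ K) : rsSeq m (t + m ^ (K + 1) * a) = rsSeq m t := by
  induction K generalizing t with
  | zero =>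
    obtain rfl : t = 0 := by simpa using ht
    have := rsSeq_mul_add hm a (j := 0) (by omega)
    simp only [add_zero] at this
    rw [zero_add, pow_one, mul_comm, this, rsSeq_zero, rsStep, ha]
    simp [Prod.zero_eq_mk]
  | succ K ih =>
    have hdecomp : t + m ^ (K + 2) * a = (t / m + m ^ (K + 1) * a) * m + t % m := by
      nth_rewrite 1 [← Nat.div_add_mod' t m]; ring
    have hmod : t % m < m := Nat.mod_lt t (by omega)
    have hquot : t / m < m ^ K := by rwa [Nat.div_lt_iff_lt_mul (by omega), ← pow_succ]
    rw [hdecomp, rsSeq_mul_add hm _ hmod, ih hquot, ← rsSeq_mul_add hm _ hmod, Nat.div_add_mod']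

theorem syndetic_rsSeq_snd_eq_zero (hm : 2 ≤ m) :
    Syndetic (fun a => (rsSeq m a).2 = 0) (2 * m ^ 2) := by
  have : NeZero m := ⟨by omega⟩
  refine ((Syndetic.of_forall fun _ => trivial).mul_add (P := m ^ 2) fun c _ => ?_).mono
    (fun _ => id) (by omega)
  -- in `(c m + 1) m + j` the digit pair `(1, j)` contributes `j`, which cancels the rest
  set v := (rsSeq m (c * m + 1)).2
  refine ⟨m + (-v).val, by rw [sq]; nlinarith [(-v).val_lt], ?_⟩
  have hpos : c * m ^ 2 + (m + (-v).val) = (c * m + 1) * m + (-v).val := by ring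
  rw [hpos, rsSeq_mul_add hm _ (-v).val_lt, rsStep, rsSeq_fst hm]
  simp [v]

theorem prefixesSyndetic_rsSeq (hm : 2 ≤ m) : PrefixesSyndetic (rsSeq m) := fun N =>
  ⟨_, (syndetic_rsSeq_snd_eq_zero hm).mul_add (P := m ^ (N + 1)) fun a ha =>
    ⟨0, by positivity, fun n hn => by
      rw [add_zero, add_comm, mul_comm,
        rsSeq_add_pow_mul hm ha (hn.trans (Nat.lt_pow_self (by omega)))]⟩⟩

end rsSeq

def codeBit (i o : ℕ) : Bool := decide (o < 2 ∨ o = 2 * i + 3)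

theorem codeBit_eq_true {i o : ℕ} : codeBit i o = true ↔ o < 2 ∨ o = 2 * i + 3 :=
  decide_eq_true_iff

/-- The letter `i < N` is coded by the block of length `2N + 3` with `1`s exactly at positions
`0`, `1` and `2i + 3`. As `11` occurs only at the start of a block, a shift by a non-multiple of
the block length is detected inside every block. -/
def blockCode {N : ℕ} (x : ℕ → Fin N) (n : ℕ) : Bool :=
  codeBit (x (n / (2 * N + 3))) (n % (2 * N + 3))

section blockCode

variable {N : ℕ} {x : ℕ → Fin N}

theorem blockCode_mul_add (t : ℕ) {o : ℕ} (ho : o < 2 * N + 3) :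
    blockCode x (t * (2 * N + 3) + o) = codeBit (x t) o := by
  rw [blockCode, mul_add_div_of_lt ho, Nat.mul_add_mod_of_lt ho]

theorem blockCode_not_and_succ {n : ℕ} (hn : n % (2 * N + 3) ≠ 0) :
    ¬ (blockCode x n = true ∧ blockCode x (n + 1) = true) := by
  have hlt := Nat.mod_lt n (by omega : 0 < 2 * N + 3)
  have hdecomp := Nat.div_add_mod' n (2 * N + 3)
  rw [← hdecomp, blockCode_mul_add _ hlt, codeBit_eq_true]
  by_cases hnext : n % (2 * N + 3) + 1 < 2 * N + 3
  · rw [add_assoc, blockCode_mul_add _ hnext, codeBit_eq_true]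
    omega
  · omega

theorem mismatchGap_blockCode_of_not_dvd {l : ℕ} (hl : ¬ 2 * N + 3 ∣ l) :
    MismatchGap (blockCode x) l (4 * N + 7) := by
  have hr : l % (2 * N + 3) ≠ 0 := fun h => hl (Nat.dvd_of_mod_eq_zero h)
  have hrL := Nat.mod_lt l (by omega : 0 < 2 * N + 3)
  refine (Syndetic.of_or_succ <| (Syndetic.of_forall fun _ => trivial).mul_add (P := 2 * N + 3)
    fun t _ =>
    ⟨2 * N + 3 - l % (2 * N + 3), by omega, ?_⟩).mono (fun _ => id) (by omega)
  -- the shifted pair lands on the `11` that starts block `t + l / (2N + 3) + 1`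
  set s := t * (2 * N + 3) + (2 * N + 3 - l % (2 * N + 3))
  have hs : s + l = (t + l / (2 * N + 3) + 1) * (2 * N + 3) + 0 := by
    have := Nat.div_add_mod' l (2 * N + 3)
    simp only [s, add_mul, one_mul]
    omega
  have hs1 : s + 1 + l = (t + l / (2 * N + 3) + 1) * (2 * N + 3) + 1 := by omega
  have hsmod : s % (2 * N + 3) ≠ 0 := by
    rw [Nat.mul_add_mod_of_lt (by omega)]; omega
  have h0 : blockCode x (s + l) = true := by
    rw [hs, blockCode_mul_add _ (by omega), codeBit_eq_true]; omega
  have h1 : blockCode x (s + 1 + l) = true := by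
    rw [hs1, blockCode_mul_add _ (by omega), codeBit_eq_true]; omega
  rw [h0, h1]
  by_contra! h
  exact blockCode_not_and_succ hsmod h

theorem MismatchGap.blockCode {Λ G : ℕ} (h : MismatchGap x Λ G) :
    MismatchGap (blockCode x) (Λ * (2 * N + 3)) ((G + 1) * (2 * N + 3)) :=
  h.mul_add fun t ht => ⟨2 * x t + 3, by omega, by
    have hshift : t * (2 * N + 3) + (2 * x t + 3) + Λ * (2 * N + 3) =
        (t + Λ) * (2 * N + 3) + (2 * x t + 3) := by ring
    rw [hshift, blockCode_mul_add _ (by omega), blockCode_mul_add _ (by omega)]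
    simp only [codeBit, ne_eq, decide_eq_decide, or_true, true_iff]
    have : (x t : ℕ) ≠ x (t + Λ) := Fin.val_ne_of_ne ht
    omega⟩

theorem PrefixesSyndetic.blockCode (h : PrefixesSyndetic x) : PrefixesSyndetic (blockCode x) :=
  fun M =>
    let ⟨_, hR⟩ := h M
    ⟨_, hR.mul_add (P := 2 * N + 3) fun a ha => ⟨0, by omega, fun n hn => by
      have hdecomp := Nat.div_add_mod' n (2 * N + 3)
      have hlt := Nat.mod_lt n (by omega : 0 < 2 * N + 3)
      have hq : n / (2 * N + 3) < M := lt_of_le_of_lt (Nat.div_le_self _ _) hn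
      rw [← hdecomp, add_zero, ← add_assoc, ← add_mul, blockCode_mul_add _ hlt,
        blockCode_mul_add _ hlt, ha _ hq]⟩⟩

end blockCode

noncomputable def codedRsSeq (m : ℕ) [NeZero m] : ℕ → Bool :=
  blockCode (Fintype.equivFin (ZMod m × ZMod m) ∘ rsSeq m)

theorem exists_mismatchGap_codedRsSeq {m : ℕ} [NeZero m] (hm : 2 ≤ m) :
    ∃ C, ∀ l, 0 < l → ∃ G, m * G ≤ 6 * l + C ∧ MismatchGap (codedRsSeq m) l G := by
  set L := 2 * Fintype.card (ZMod m × ZMod m) + 3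
  refine ⟨3 * m * L, fun l hl => ?_⟩
  by_cases hdiv : L ∣ l
  · obtain ⟨Λ, rfl⟩ := hdiv
    obtain ⟨G, hG, hgap⟩ := exists_mismatchGap_rsSeq hm (Nat.pos_of_mul_pos_left hl)
    refine ⟨(G + 1) * L, ?_, by
      rw [mul_comm]; exact (hgap.comp (Fintype.equivFin _).injective).blockCode⟩
    have := Nat.mul_le_mul_right L hG
    simp only [add_mul, mul_add] at this ⊢
    nlinarith
  · have hgap : 4 * Fintype.card (ZMod m × ZMod m) + 7 ≤ 3 * L := by omega
    exact ⟨_, by nlinarith, mismatchGap_blockCode_of_not_dvd hdiv⟩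

theorem exists_uniformlyRecurrent_acritExp_le {d m : ℕ} (hd : 2 ≤ d) (hm : 2 ≤ m) :
    ∃ u : ℕ → Fin d, UniformlyRecurrent u ∧ acritExp u ≤ ((m + 7 : ℕ) : ℝ≥0∞) / m := by
  have : NeZero m := ⟨by omega⟩
  let f : Bool → Fin d := Fin.castLE hd ∘ finTwoEquiv.symm
  have hf : f.Injective := (Fin.castLE_injective hd).comp finTwoEquiv.symm.injective
  obtain ⟨C, hC⟩ := exists_mismatchGap_codedRsSeq hm
  refine ⟨f ∘ codedRsSeq m,
    (((prefixesSyndetic_rsSeq hm).comp _).blockCode.comp f).uniformlyRecurrent,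
    acritExp_le_of_mismatchGap (c := 6) (C := C) (by omega) fun l hl => ?_⟩
  obtain ⟨G, hG, hgap⟩ := hC l hl
  exact ⟨G, hG, hgap.comp hf⟩

/-- For every `d ≥ 2`, the infimum of the asymptotic critical
exponent over all uniformly recurrent sequences over a `d`-letter alphabet
equals `1`; consequently `RT*(d) = inf {E*(u) : u a d-ary sequence} = 1`. -/
theorem inf_acritExp_uniformlyRecurrent_eq_one_and_RTstar_eq_one
    (d : ℕ) (hd : 2 ≤ d) :
    sInf {x : ℝ≥0∞ | ∃ u : ℕ → Fin d, UniformlyRecurrent u ∧ acritExp u = x} = 1 ∧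
    sInf {x : ℝ≥0∞ | ∃ u : ℕ → Fin d, acritExp u = x} = 1 := by
  constructor <;> refine sInf_eq_one_of_forall_le_div 7 ?_ fun m hm => ?_
  · rintro x ⟨u, -, rfl⟩
    exact one_le_acritExp u
  · obtain ⟨u, hu, hle⟩ := exists_uniformlyRecurrent_acritExp_le hd hm
    exact ⟨_, ⟨u, hu, rfl⟩, hle⟩
  · rintro x ⟨u, rfl⟩
    exact one_le_acritExp u
  · obtain ⟨u, -, hle⟩ := exists_uniformlyRecurrent_acritExp_le hd hm
    exact ⟨_, ⟨u, rfl⟩, hle⟩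

end Paper
end

section
/- Let u be a recurrent aperiodic sequence over a finite alphabet, let (u_n)_{n∈ℕ} be the sequence of all bispecial factors of u ordered by length, and for each n let r_n be a shortest return word to u_n in u. Then E(u) = 1 + sup_{n∈ℕ} |u_n|/|r_n| and E*(u) = 1 + limsup_{n→∞} |u_n|/|r_n|. -/
open Filter Topology Matrix
open scoped ENNReal

/-!
A repetition `w^(n/|w|)` with `n > |w|` makes the factor of length `n - |w|` at its start occur
again `|w|` letters later. Extending this factor to the right (aperiodicity) and then to the left
(recurrence and aperiodicity) while keeping two occurrences at distance `|w|` produces a bispecial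
factor `b` with `|b| ≥ n - |w|` and a return word of length at most `|w|`, so
`n/|w| ≤ 1 + |B k|/|r k|` for some `k`. Conversely `r k` followed by `B k` is a repetition of
exponent `1 + |B k|/|r k|`. For `E*`, a root of length `l` is controlled either by some `B k`
with `k ≥ N`, or by one of the finitely many `B k` with `k < N`, which contribute at most
`|B k|/l → 0`; and when `E(u) < ∞` the lengths `|r k|` tend to infinity with `|B k|`.
-/

namespace Paper

open Filter Topology
open scoped ENNReal

section Words

variable {A : Type*} {u : ℕ → A}

@[simp] lemma length_factorAt (u : ℕ → A) (i n : ℕ) : (factorAt u i n).length = n := by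
  simp [factorAt]

@[simp] lemma getElem_factorAt {i n t : ℕ} (h : t < (factorAt u i n).length) :
    (factorAt u i n)[t] = u (i + t) := by
  simp [factorAt]

lemma factorAt_succ (u : ℕ → A) (i n : ℕ) :
    factorAt u i (n + 1) = factorAt u i n ++ [u (i + n)] := by
  simp [factorAt, List.range_succ]

lemma factorAt_succ_eq_cons (u : ℕ → A) (i n : ℕ) :
    factorAt u i (n + 1) = u i :: factorAt u (i + 1) n := by
  simp [factorAt, List.range_succ_eq_map, Nat.add_comm 1, Nat.add_assoc]

lemma occursAt_factorAt (u : ℕ → A) (i n : ℕ) : OccursAt u (factorAt u i n) i := by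
  simp [OccursAt]

lemma occursAt_iff {w : List A} {i : ℕ} :
    OccursAt u w i ↔ ∀ t (h : t < w.length), w[t] = u (i + t) := by
  simp [OccursAt, List.ext_getElem_iff]

lemma occursAt_factorAt_iff {i j m : ℕ} :
    OccursAt u (factorAt u i m) j ↔ ∀ t < m, u (i + t) = u (j + t) := by
  simp [occursAt_iff]

lemma occursAt_cons_iff {c : A} {w : List A} {i : ℕ} :
    OccursAt u (c :: w) i ↔ u i = c ∧ OccursAt u w (i + 1) := by
  simp [OccursAt, factorAt_succ_eq_cons, eq_comm]

lemma occursAt_append_singleton_iff {c : A} {w : List A} {i : ℕ} :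
    OccursAt u (w ++ [c]) i ↔ OccursAt u w i ∧ u (i + w.length) = c := by
  simp [OccursAt, factorAt_succ, eq_comm]

lemma OccursAt.of_factorAt {v : List A} {q s o M : ℕ}
    (hwin : OccursAt u (factorAt u q M) s) (hv : OccursAt u v (q + o))
    (ho : o + v.length ≤ M) : OccursAt u v (s + o) := by
  rw [occursAt_factorAt_iff] at hwin
  rw [occursAt_iff] at hv ⊢
  intro t ht
  rw [hv t ht, Nat.add_assoc, Nat.add_assoc, hwin _ (by omega)]

end Words

section Special

variable {A : Type*} {u : ℕ → A}

lemma exists_ge_occursAt_pair (hrec : Recurrent u) {v : List A} {q l : ℕ}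
    (h₁ : OccursAt u v q) (h₂ : OccursAt u v (q + l)) (N : ℕ) :
    ∃ s, N ≤ s ∧ OccursAt u v s ∧ OccursAt u v (s + l) := by
  obtain ⟨s, hs, hwin⟩ :=
    hrec (factorAt u q (l + v.length)) ⟨q, occursAt_factorAt u q _⟩ N
  exact ⟨s, hs, by simpa using hwin.of_factorAt (o := 0) h₁ (by omega),
    hwin.of_factorAt h₂ le_rfl⟩

/-- If the windows of `u` at `q` and `q + l` agree on a prefix that never becomes right
special, they agree forever and `u` is eventually `l`-periodic. -/
lemma exists_rightSpecial_factorAt (hap : ¬ EventuallyPeriodic u) {q l m : ℕ} (hl : 0 < l)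
    (hm : OccursAt u (factorAt u q m) (q + l)) :
    ∃ m', m ≤ m' ∧ RightSpecial u (factorAt u q m') ∧ OccursAt u (factorAt u q m') (q + l) := by
  by_contra! hno
  have hagree : ∀ k, OccursAt u (factorAt u q (m + k)) (q + l) := by
    intro k
    induction k with
    | zero => exact hm
    | succ k ih =>
      have hnext : u (q + (m + k)) = u (q + l + (m + k)) := by
        by_contra hne
        refine hno (m + k) (by omega) ⟨_, _, hne, ⟨q, ?_⟩, ⟨q + l, ?_⟩⟩ ih
        · rw [← factorAt_succ]; exact occursAt_factorAt u q _
        · exact occursAt_append_singleton_iff.mpr ⟨ih, by simp⟩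
      rw [← Nat.add_assoc, factorAt_succ, occursAt_append_singleton_iff]
      exact ⟨ih, by simpa using hnext.symm⟩
  refine hap ⟨l, hl, q, fun n hn => ?_⟩
  have := occursAt_factorAt_iff.mp (hagree (n - q + 1)) (n - q) (by omega)
  rwa [Nat.add_sub_cancel' hn, Nat.add_right_comm, Nat.add_sub_cancel' hn, eq_comm] at this

lemma eq_of_not_leftSpecial {x : List A} (hx : ¬ LeftSpecial u x) {p q : ℕ}
    (hp : OccursAt u x (p + 1)) (hq : OccursAt u x (q + 1)) : u p = u q := by
  by_contra hne
  exact hx ⟨u p, u q, hne, ⟨p, occursAt_cons_iff.mpr ⟨rfl, hp⟩⟩,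
    ⟨q, occursAt_cons_iff.mpr ⟨rfl, hq⟩⟩⟩

/-- Recurrence lets every right extension `x d` be read at a position preceded by a letter,
which is then forced to be `u p`. -/
lemma rightSpecial_cons (hrec : Recurrent u) {x : List A} (hx : RightSpecial u x)
    (hnls : ¬ LeftSpecial u x) {p : ℕ} (hp : OccursAt u x (p + 1)) :
    RightSpecial u (u p :: x) := by
  have hext : ∀ d, IsFactor u (x ++ [d]) → IsFactor u (u p :: x ++ [d]) := by
    intro d hd
    obtain ⟨j, hj, hocc⟩ := hrec _ hd 1
    obtain ⟨j, rfl⟩ : ∃ j', j = j' + 1 := ⟨j - 1, by omega⟩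
    refine ⟨j, List.cons_append .. ▸ occursAt_cons_iff.mpr ⟨?_, hocc⟩⟩
    exact eq_of_not_leftSpecial hnls (occursAt_append_singleton_iff.mp hocc).1 hp
  obtain ⟨c, c', hne, hc, hc'⟩ := hx
  exact ⟨c, c', hne, hext c hc, hext c' hc'⟩

/-- If no such bispecial factor exists, `v` extends to the left letter by letter into ever longer
right special factors, and reading these extensions at two occurrences of `v` at distance `l`
shows that `u` is `l`-periodic. -/
lemma exists_bispecial_occursAt_pair (hrec : Recurrent u) (hap : ¬ EventuallyPeriodic u)
    {v : List A} {q l : ℕ} (hl : 0 < l) (hv : RightSpecial u v)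
    (h₁ : OccursAt u v q) (h₂ : OccursAt u v (q + l)) :
    ∃ b s, Bispecial u b ∧ v.length ≤ b.length ∧ OccursAt u b s ∧ OccursAt u b (s + l) := by
  by_contra! hno
  have far := exists_ge_occursAt_pair hrec h₁ h₂
  have hchain : ∀ k, ∃ x : List A, RightSpecial u x ∧ x.length = v.length + k ∧
      ∀ i, OccursAt u v (i + k) → OccursAt u x i := by
    intro k
    induction k with
    | zero => exact ⟨v, hv, rfl, fun i hi => hi⟩
    | succ k ih =>
      obtain ⟨x, hx, hxlen, hxocc⟩ := ih
      obtain ⟨s, hs, hs₁, hs₂⟩ := far (k + 1)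
      obtain ⟨p, rfl⟩ : ∃ p, s = p + 1 + k := ⟨s - k - 1, by omega⟩
      have hp : OccursAt u x (p + 1) := hxocc _ hs₁
      have hnls : ¬ LeftSpecial u x := fun hls =>
        hno x (p + 1) ⟨hls, hx⟩ (by omega) hp (hxocc _ (by rwa [Nat.add_right_comm]))
      refine ⟨u p :: x, rightSpecial_cons hrec hx hnls hp, by simp [hxlen]; omega,
        fun i hi => ?_⟩
      have hxi : OccursAt u x (i + 1) := hxocc _ (by rwa [Nat.add_assoc, Nat.add_comm 1])
      exact occursAt_cons_iff.mpr ⟨eq_of_not_leftSpecial hnls hxi hp, hxi⟩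
  refine hap ⟨l, hl, 0, fun n _ => ?_⟩
  obtain ⟨s, hs, hs₁, hs₂⟩ := far (n + 1)
  obtain ⟨x, -, hxlen, hxocc⟩ := hchain (s - n)
  have hn := occursAt_iff.mp (hxocc n (by rwa [Nat.add_sub_cancel' (by omega)])) 0 (by omega)
  have hnl := occursAt_iff.mp
    (hxocc (n + l) (by rwa [Nat.add_right_comm, Nat.add_sub_cancel' (by omega)])) 0 (by omega)
  simpa using hnl.symm.trans hn

lemma exists_isReturnWord_length_le {b : List A} {s l : ℕ} (hl : 0 < l)
    (h₁ : OccursAt u b s) (h₂ : OccursAt u b (s + l)) :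
    ∃ r, IsReturnWord u b r ∧ r.length ≤ l := by
  classical
  have hex : ∃ t, 0 < t ∧ OccursAt u b (s + t) := ⟨l, hl, h₂⟩
  obtain ⟨htpos, hocc⟩ := Nat.find_spec hex
  refine ⟨factorAt u s (Nat.find hex), ⟨s, s + Nat.find hex, by omega, h₁, hocc,
    fun t hst hts ht => ?_, by simp⟩, by simpa using Nat.find_min' hex ⟨hl, h₂⟩⟩
  exact Nat.find_min hex (show t - s < Nat.find hex by omega)
    ⟨by omega, by rwa [Nat.add_sub_cancel' hst.le]⟩

/-- The two occurrences of `b` bounding a return word `r` make `u` `|r|`-periodic on a window of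
length `|r| + |b|`. -/
lemma hasPowerFactor_of_isReturnWord {b r : List A} (h : IsReturnWord u b r) :
    HasPowerFactor u r (r.length + b.length) := by
  obtain ⟨i, j, hij, hbi, hbj, -, rfl⟩ := h
  set d := j - i
  have hshift : ∀ t < b.length, u (i + d + t) = u (i + t) := fun t ht => by
    rw [show i + d = j by omega, ← occursAt_iff.mp hbj t ht, occursAt_iff.mp hbi t ht]
  have hper : ∀ k < d + b.length, u (i + k) = u (i + k % d) := by
    intro k
    induction k using Nat.strong_induction_on with
    | _ k ih =>
      intro hk
      rcases lt_or_ge k d with hkd | hkd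
      · rw [Nat.mod_eq_of_lt hkd]
      · rw [← Nat.add_sub_cancel' hkd, ← Nat.add_assoc, hshift _ (by omega),
          ih _ (by omega) (by omega), Nat.add_sub_cancel' hkd, Nat.mod_eq_sub_mod hkd]
  refine ⟨List.ne_nil_of_length_pos (by simp; omega), i, fun k hk => ?_⟩
  have hmod : k % d < d := Nat.mod_lt _ (by omega)
  simp only [length_factorAt] at hk ⊢
  rw [List.getD_eq_getElem _ _ (by simpa using hmod), getElem_factorAt, hper k hk]

lemma HasPowerFactor.exists_occursAt_factorAt {w : List A} {n : ℕ}
    (h : HasPowerFactor u w n) : ∃ q, OccursAt u (factorAt u q (n - w.length)) (q + w.length) := by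
  obtain ⟨-, i, hi⟩ := h
  refine ⟨i, occursAt_factorAt_iff.mpr fun t ht => ?_⟩
  rw [hi t (by omega), Nat.add_right_comm, Nat.add_assoc, hi _ (by omega), Nat.add_mod_right]

theorem HasPowerFactor.exists_bispecial_isReturnWord (hrec : Recurrent u)
    (hap : ¬ EventuallyPeriodic u) {w : List A} {n : ℕ} (h : HasPowerFactor u w n) :
    ∃ b r, Bispecial u b ∧ IsReturnWord u b r ∧ n - w.length ≤ b.length ∧
      r.length ≤ w.length := by
  have hl : 0 < w.length := List.length_pos_iff.mpr h.1
  obtain ⟨q, hq⟩ := h.exists_occursAt_factorAt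
  obtain ⟨m, hm, hrs, hocc⟩ := exists_rightSpecial_factorAt hap hl hq
  obtain ⟨b, s, hb, hlen, hs₁, hs₂⟩ :=
    exists_bispecial_occursAt_pair hrec hap hl hrs (occursAt_factorAt u q m) hocc
  obtain ⟨r, hr, hrlen⟩ := exists_isReturnWord_length_le hl hs₁ hs₂
  exact ⟨b, r, hb, hr, by simp only [length_factorAt] at hlen; omega, hrlen⟩

end Special

section Exponents

variable {A : Type*} {u : ℕ → A}

lemma le_maxExpLen {w : List A} {n : ℕ} (h : HasPowerFactor u w n) :
    (n : ℝ≥0∞) / w.length ≤ maxExpLen u w.length :=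
  le_sSup ⟨w, n, rfl, h, rfl⟩

lemma maxExpLen_le_critExp (u : ℕ → A) (l : ℕ) : maxExpLen u l ≤ critExp u :=
  sSup_le fun _ ⟨w, n, hw, h, he⟩ => le_sSup ⟨w, n, h, hw ▸ he⟩

lemma IsReturnWord.length_pos {b r : List A} (h : IsReturnWord u b r) : 0 < r.length := by
  obtain ⟨i, j, hij, -, -, -, rfl⟩ := h
  simpa using hij

lemma one_add_div_le_maxExpLen {b r : List A} (h : IsReturnWord u b r) :
    1 + (b.length : ℝ≥0∞) / r.length ≤ maxExpLen u r.length := by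
  have hr : (r.length : ℝ≥0∞) ≠ 0 := by exact_mod_cast h.length_pos.ne'
  calc 1 + (b.length : ℝ≥0∞) / r.length = ((r.length + b.length : ℕ) : ℝ≥0∞) / r.length := by
        push_cast; rw [ENNReal.add_div, ENNReal.div_self hr (by simp)]
    _ ≤ maxExpLen u r.length := le_maxExpLen (hasPowerFactor_of_isReturnWord h)

lemma natCast_div_le_one_add_sub_div (n l : ℕ) :
    (n : ℝ≥0∞) / l ≤ 1 + ((n - l : ℕ) : ℝ≥0∞) / l :=
  calc (n : ℝ≥0∞) / l ≤ ((l + (n - l) : ℕ) : ℝ≥0∞) / l := by gcongr; omega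
    _ = l / l + ((n - l : ℕ) : ℝ≥0∞) / l := by push_cast; exact ENNReal.add_div
    _ ≤ 1 + ((n - l : ℕ) : ℝ≥0∞) / l := by gcongr; exact ENNReal.div_self_le_one

end Exponents

lemma limsup_iSup_min_div_le (ρ : ℕ → ℝ≥0∞) (b : ℕ → ℕ) :
    limsup (fun l : ℕ => ⨆ k, min (ρ k) ((b k : ℝ≥0∞) / l)) atTop ≤ limsup ρ atTop := by
  rw [limsup_eq_iInf_iSup_of_nat (u := ρ)]
  refine le_iInf fun N => ?_
  set M := ∑ k ∈ Finset.range N, b k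
  have hbound : ∀ l : ℕ, ⨆ k, min (ρ k) ((b k : ℝ≥0∞) / l) ≤ (M : ℝ≥0∞) / l + ⨆ k ≥ N, ρ k := by
    refine fun l => iSup_le fun k => ?_
    rcases lt_or_ge k N with hk | hk
    · refine (min_le_right _ _).trans (le_add_right ?_)
      gcongr
      exact Finset.single_le_sum (fun _ _ => Nat.zero_le _) (Finset.mem_range.mpr hk)
    · exact (min_le_left _ _).trans (le_add_left (le_iSup₂ (f := fun k _ => ρ k) k hk))
  have hlim : Tendsto (fun l : ℕ => (M : ℝ≥0∞) / l + ⨆ k ≥ N, ρ k) atTop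
      (𝓝 (⨆ k ≥ N, ρ k)) := by
    simpa using (ENNReal.Tendsto.const_div ENNReal.tendsto_nat_nhds_top
      (Or.inr (ENNReal.natCast_ne_top M))).add_const (⨆ k ≥ N, ρ k)
  exact (limsup_le_limsup (Eventually.of_forall hbound)).trans hlim.limsup_eq.le

lemma limsup_eq_top_of_iSup_eq_top {f : ℕ → ℝ≥0∞} (hf : ∀ n, f n ≠ ⊤) (h : ⨆ n, f n = ⊤) :
    limsup f atTop = ⊤ := by
  by_contra hne
  obtain ⟨N, hN⟩ := eventually_atTop.mp
    (eventually_lt_of_limsup_lt (ENNReal.lt_add_right hne one_ne_zero))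
  have hle : ⨆ n, f n ≤ (limsup f atTop + 1) + ∑ k ∈ Finset.range N, f k := by
    refine iSup_le fun n => ?_
    rcases lt_or_ge n N with hn | hn
    · exact le_add_left (Finset.single_le_sum (fun _ _ => zero_le) (Finset.mem_range.mpr hn))
    · exact le_add_right (hN n hn).le
  refine (hle.trans_lt ?_).ne h
  exact ENNReal.add_lt_top.mpr
    ⟨ENNReal.add_lt_top.mpr ⟨lt_top_iff_ne_top.mpr hne, ENNReal.one_lt_top⟩,
      ENNReal.sum_lt_top.mpr fun k _ => (hf k).lt_top⟩

lemma tendsto_atTop_of_div_le {b c : ℕ → ℕ} {S : ℝ≥0∞} (hb : Tendsto b atTop atTop)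
    (hS : S ≠ ⊤) (h : ∀ k, (b k : ℝ≥0∞) / c k ≤ S) : Tendsto c atTop atTop := by
  refine tendsto_atTop.mpr fun C => ?_
  obtain ⟨m, hm⟩ := ENNReal.exists_nat_gt (ENNReal.mul_ne_top hS (ENNReal.natCast_ne_top C))
  filter_upwards [hb.eventually_ge_atTop m] with k hk
  by_contra! hlt
  have hbk : (b k : ℝ≥0∞) ≤ S * c k :=
    (ENNReal.div_le_iff_le_mul (Or.inr hS) (Or.inl (ENNReal.natCast_ne_top _))).mp (h k)
  have : (m : ℝ≥0∞) < m :=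
    calc (m : ℝ≥0∞) ≤ b k := by exact_mod_cast hk
      _ ≤ S * c k := hbk
      _ ≤ S * C := by gcongr
      _ < m := hm
  exact lt_irrefl _ this

lemma tendsto_length_of_injective {A : Type*} [Finite A] {B : ℕ → List A}
    (hB : Function.Injective B) : Tendsto (fun n => (B n).length) atTop atTop := by
  have hlen : Tendsto (List.length : List A → ℕ) cofinite atTop :=
    tendsto_atTop.mpr fun m => by
      simpa [eventually_cofinite, not_le] using List.finite_length_lt A m
  exact hlen.comp (Nat.cofinite_eq_atTop ▸ hB.tendsto_cofinite)

section Enumeration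

variable {A : Type*} {u : ℕ → A} {B r : ℕ → List A}

lemma maxExpLen_le_one_add_iSup (hrec : Recurrent u) (hap : ¬ EventuallyPeriodic u)
    (hB : ∀ w, Bispecial u w → ∃ n, B n = w)
    (hrmin : ∀ n s, IsReturnWord u (B n) s → (r n).length ≤ s.length) (l : ℕ) :
    maxExpLen u l ≤ 1 + ⨆ k, min (((B k).length : ℝ≥0∞) / (r k).length) ((B k).length / l) := by
  refine sSup_le ?_
  rintro _ ⟨w, n, rfl, h, rfl⟩
  obtain ⟨b, s, hb, hs, hblen, hslen⟩ := h.exists_bispecial_isReturnWord hrec hap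
  obtain ⟨k, rfl⟩ := hB b hb
  have hBk : ((n - w.length : ℕ) : ℝ≥0∞) ≤ (B k).length := by exact_mod_cast hblen
  have hrk : ((r k).length : ℝ≥0∞) ≤ w.length := by exact_mod_cast (hrmin k s hs).trans hslen
  calc (n : ℝ≥0∞) / w.length ≤ 1 + ((n - w.length : ℕ) : ℝ≥0∞) / w.length :=
        natCast_div_le_one_add_sub_div n w.length
    _ ≤ 1 + min (((B k).length : ℝ≥0∞) / (r k).length) ((B k).length / w.length) := by
        gcongr
        exact le_min (ENNReal.div_le_div hBk hrk) (ENNReal.div_le_div_right hBk _)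
    _ ≤ _ := by
        gcongr
        exact le_iSup (fun k => min (((B k).length : ℝ≥0∞) / (r k).length)
          ((B k).length / w.length)) k

lemma critExp_eq_one_add_iSup (hrec : Recurrent u) (hap : ¬ EventuallyPeriodic u)
    (hB : ∀ w, Bispecial u w → ∃ n, B n = w) (hr : ∀ n, IsReturnWord u (B n) (r n))
    (hrmin : ∀ n s, IsReturnWord u (B n) s → (r n).length ≤ s.length) :
    critExp u = 1 + ⨆ k, ((B k).length : ℝ≥0∞) / (r k).length := by
  refine le_antisymm (sSup_le ?_) ?_
  · rintro _ ⟨w, n, h, rfl⟩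
    exact (le_maxExpLen h).trans ((maxExpLen_le_one_add_iSup hrec hap hB hrmin _).trans
      (add_le_add_right (iSup_mono fun k => min_le_left _ _) 1))
  · rw [ENNReal.add_iSup]
    exact iSup_le fun k => (one_add_div_le_maxExpLen (hr k)).trans (maxExpLen_le_critExp u _)

/-- When `E(u)` is finite the ratios `|B k|/|r k|` are bounded while `|B k| → ∞`, so the
lengths `|r k|` tend to infinity and the lower bound `1 + |B k|/|r k| ≤ maxExpLen u |r k|`
passes to the limsup. -/
lemma limsup_maxExpLen_eq_one_add_limsup [Finite A] (hrec : Recurrent u)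
    (hap : ¬ EventuallyPeriodic u) (hB : ∀ w, Bispecial u w → ∃ n, B n = w)
    (hBinj : Function.Injective B) (hr : ∀ n, IsReturnWord u (B n) (r n))
    (hrmin : ∀ n s, IsReturnWord u (B n) s → (r n).length ≤ s.length)
    (hfin : critExp u ≠ ⊤) :
    limsup (maxExpLen u) atTop =
      1 + limsup (fun k => ((B k).length : ℝ≥0∞) / (r k).length) atTop := by
  set ρ := fun k => ((B k).length : ℝ≥0∞) / (r k).length
  refine le_antisymm ?_ ?_
  · calc limsup (maxExpLen u) atTop
        ≤ limsup (fun l : ℕ => 1 + ⨆ k, min (ρ k) ((B k).length / l)) atTop :=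
          limsup_le_limsup (Eventually.of_forall (maxExpLen_le_one_add_iSup hrec hap hB hrmin))
      _ = 1 + limsup (fun l : ℕ => ⨆ k, min (ρ k) ((B k).length / l)) atTop :=
          limsup_const_add atTop _ 1 (by isBoundedDefault) (by isBoundedDefault)
      _ ≤ 1 + limsup ρ atTop := by
          gcongr
          exact limsup_iSup_min_div_le ρ _
  · have hS : ⨆ k, ρ k ≠ ⊤ := by
      rw [critExp_eq_one_add_iSup hrec hap hB hr hrmin] at hfin
      exact fun h => hfin (by rw [h, add_top])
    have hrlen := tendsto_atTop_of_div_le (tendsto_length_of_injective hBinj) hS (le_iSup ρ)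
    calc 1 + limsup ρ atTop = limsup (fun k => 1 + ρ k) atTop :=
          (limsup_const_add atTop ρ 1 (by isBoundedDefault) (by isBoundedDefault)).symm
      _ ≤ limsup (fun k => maxExpLen u (r k).length) atTop :=
          limsup_le_limsup (Eventually.of_forall fun k => one_add_div_le_maxExpLen (hr k))
      _ ≤ limsup (maxExpLen u) atTop := hrlen.limsup_comp_le_limsup (u := maxExpLen u)

end Enumeration

theorem critExp_and_acritExp_eq_via_return_words_general
    {A : Type*} [Fintype A] (u : ℕ → A)
    (hrec : Recurrent u) (hap : ¬ EventuallyPeriodic u)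
    (B : ℕ → List A)
    (hB2 : ∀ w, Bispecial u w → ∃ n, B n = w)
    (hB3 : Function.Injective B)
    (r : ℕ → List A)
    (hr : ∀ n, IsReturnWord u (B n) (r n))
    (hrmin : ∀ n s, IsReturnWord u (B n) s → (r n).length ≤ s.length) :
    critExp u = 1 + (⨆ n, ((B n).length : ℝ≥0∞) / ((r n).length : ℝ≥0∞)) ∧
    acritExp u = 1 + Filter.limsup
      (fun n => ((B n).length : ℝ≥0∞) / ((r n).length : ℝ≥0∞)) Filter.atTop := by
  have hcrit := critExp_eq_one_add_iSup hrec hap hB2 hr hrmin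
  refine ⟨hcrit, ?_⟩
  rw [acritExp]
  split_ifs with htop
  · have hS : ⨆ n, ((B n).length : ℝ≥0∞) / (r n).length = ⊤ := by
      simpa [hcrit] using htop
    have hρ (n : ℕ) : ((B n).length : ℝ≥0∞) / (r n).length ≠ ⊤ :=
      ENNReal.div_ne_top (ENNReal.natCast_ne_top _) (by exact_mod_cast (hr n).length_pos.ne')
    rw [limsup_eq_top_of_iSup_eq_top hρ hS, add_top]
  · exact limsup_maxExpLen_eq_one_add_limsup hrec hap hB2 hB3 hr hrmin htop

/-- For a recurrent aperiodic sequence `u` over a finite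
alphabet, if `(B n)` enumerates all bispecial factors of `u` ordered by length
and `r n` is a shortest return word to `B n`, then
`E(u) = 1 + sup_n |B n|/|r n|` and `E*(u) = 1 + limsup_n |B n|/|r n|`. -/
theorem critExp_and_acritExp_eq_via_return_words
    {A : Type*} [Fintype A] [DecidableEq A] (u : ℕ → A)
    (hrec : Recurrent u) (hap : ¬ EventuallyPeriodic u)
    (B : ℕ → List A)
    (hB1 : ∀ n, Bispecial u (B n))
    (hB2 : ∀ w, Bispecial u w → ∃ n, B n = w)
    (hB3 : Function.Injective B)
    (hB4 : Monotone fun n => (B n).length)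
    (r : ℕ → List A)
    (hr : ∀ n, IsReturnWord u (B n) (r n))
    (hrmin : ∀ n s, IsReturnWord u (B n) s → (r n).length ≤ s.length) :
    critExp u = 1 + (⨆ n, ((B n).length : ℝ≥0∞) / ((r n).length : ℝ≥0∞)) ∧
    acritExp u = 1 + Filter.limsup
      (fun n => ((B n).length : ℝ≥0∞) / ((r n).length : ℝ≥0∞)) Filter.atTop :=
  critExp_and_acritExp_eq_via_return_words_general u hrec hap B hB2 hB3 r hr hrmin

end Paper
end

section
/- Every constant gap sequence over an alphabet of d letters has minimal period at most 2^{d−1}. -/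
open Filter Topology Matrix
open scoped ENNReal

/-!
The letters of a constant gap sequence occupy residue classes `a_c + g_c ℕ` that partition `ℕ`,
so the sequence has period `N = lcm g_c`, and it suffices to bound the lcm of an exact covering
system with `d` classes by `2^(d-1)`.

For `D ∣ N` let `V_D` be the span of the `d` functions `x ↦ #{y < N | y ≡ x [MOD D], y ∈ class c}`.
Summing over the residues mod `D` maps `V_(p D)` onto `V_D`, and its kernel has dimension at
least `p - 1`. Indeed, let `q = p ^ (v_p D + 1)`, which divides some modulus `g_c` because `N` is
the lcm, and for the `p` residues `r ≡ a_c` mod `q / p` sum the functions of the classes contained in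
`r + q ℕ`. These sums are supported on distinct residues mod `q`, yet they all have the same image:
a shift that moves `r` to the next such residue fixes every class whose modulus `q` does not
divide. Hence `d ≥ dim V_N ≥ 1 + ∑ (p - 1)` over the prime factors of `N` counted with
multiplicity, and `p ≤ 2^(p-1)` gives `N ≤ 2^(d-1)`.
-/

namespace Paper

open Finset Module

theorem modEq_add_iff_of_dvd {m s : ℕ} (h : m ∣ s) (y x : ℕ) :
    y + s ≡ x [MOD m] ↔ y ≡ x [MOD m] := by
  have hs : y + s ≡ y [MOD m] := by
    simpa using (Nat.ModEq.refl y).add (Nat.modEq_zero_iff_dvd.mpr h)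
  exact ⟨hs.symm.trans, hs.trans⟩

theorem count_eq_count_of_shift {P Q : ℕ → Prop} [DecidablePred P] [DecidablePred Q] {n s : ℕ}
    (hP : Function.Periodic P n) (hPQ : ∀ y, P (y + s) ↔ Q y) :
    Nat.count P n = Nat.count Q n := by
  have hn : ∀ k, P (n + k) ↔ P k := fun k => by rw [add_comm, hP]
  have h := Nat.count_add (p := P) n s
  rw [Nat.count_add'] at h
  simp only [hn, hPQ] at h
  exact (Nat.add_right_cancel h).symm

theorem count_modEq_of_dvd {r n : ℕ} (hr : 0 < r) (h : r ∣ n) (v : ℕ) :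
    n.count (· ≡ v [MOD r]) = n / r := by
  simp [Nat.count_modEq_card _ hr, Nat.mod_eq_zero_of_dvd h]

theorem dvd_pow_mul_ordCompl {m n p u : ℕ} (hmn : m ∣ n) (hmu : m.factorization p ≤ u) :
    m ∣ p ^ u * ordCompl[p] n := by
  rw [← Nat.ordProj_mul_ordCompl_eq_self m p]
  exact mul_dvd_mul (pow_dvd_pow p hmu) (Nat.ordCompl_dvd_ordCompl_of_dvd hmn p)

theorem eq_of_add_mul_pow_mul_ordCompl_modEq {p n u r t t' : ℕ} (hp : p.Prime) (hn : n ≠ 0)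
    (ht : t < p) (ht' : t' < p)
    (h : r + t * (p ^ u * ordCompl[p] n) ≡ r + t' * (p ^ u * ordCompl[p] n) [MOD p ^ (u + 1)]) :
    t = t' := by
  have h' := Nat.ModEq.add_left_cancel' r h
  rw [← mul_assoc, ← mul_assoc, mul_right_comm t, mul_right_comm t', pow_succ'] at h'
  have hmod := (Nat.ModEq.mul_right_cancel' (pow_ne_zero u hp.ne_zero) h').cancel_right_of_coprime
    (Nat.coprime_ordCompl hp hn)
  rwa [Nat.ModEq, Nat.mod_eq_of_lt ht, Nat.mod_eq_of_lt ht'] at hmod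

theorem linearIndependent_sub_of_apply {K X : Type*} [Field K] {v : ℕ → X → K} {x : ℕ → X}
    {m : ℕ} (hdiag : ∀ j ≤ m, v j (x j) ≠ 0) (hoff : ∀ i ≤ m, ∀ j ≤ m, i ≠ j → v i (x j) = 0) :
    LinearIndependent K (fun j : Fin m => v (j + 1) - v 0) := by
  rw [Fintype.linearIndependent_iff]
  intro c hc j
  have hj := congrFun hc (x (j + 1))
  simp only [Finset.sum_apply, Pi.smul_apply, Pi.sub_apply, smul_eq_mul, Pi.zero_apply,
    hoff 0 (Nat.zero_le m) (j + 1) j.2 (by omega), sub_zero] at hj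
  rw [sum_eq_single j (fun j' _ hj' => by rw [hoff _ j'.2 _ j.2 (by omega), mul_zero])
    (by simp)] at hj
  exact (mul_eq_zero.mp hj).resolve_right (hdiag _ j.2)

theorem finrank_map_add_le_of_linearIndependent {K M N : Type*} [Field K] [AddCommGroup M]
    [Module K M] [AddCommGroup N] [Module K N] (V : Submodule K M) [FiniteDimensional K V]
    (f : M →ₗ[K] N) {m : ℕ} {v : Fin m → M} (hv : LinearIndependent K v) (hvV : ∀ j, v j ∈ V)
    (hvf : ∀ j, f (v j) = 0) :
    finrank K (V.map f) + m ≤ finrank K V := by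
  set f' := f ∘ₗ V.subtype
  have hv' : LinearIndependent K (fun j => (⟨⟨v j, hvV j⟩, hvf j⟩ : LinearMap.ker f')) :=
    LinearIndependent.of_comp (V.subtype ∘ₗ (LinearMap.ker f').subtype) hv
  have hrank := LinearMap.finrank_range_add_finrank_ker f'
  rw [LinearMap.range_comp, Submodule.range_subtype] at hrank
  have hker := hv'.fintype_card_le_finrank
  rw [Fintype.card_fin] at hker
  omega

section ExactCover

variable {ι : Type*}

def IsExactCover (a g : ι → ℕ) : Prop :=
  ∀ x : ℕ, ∃! i, x ≡ a i [MOD g i]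

theorem IsExactCover.count_eq_sum [Fintype ι] {a g : ι → ℕ} (h : IsExactCover a g)
    (P : ℕ → Prop) [DecidablePred P] (n : ℕ) :
    Nat.count P n = ∑ i, Nat.count (fun y => P y ∧ y ≡ a i [MOD g i]) n := by
  induction n with
  | zero => simp
  | succ n ih =>
    obtain ⟨i, hi, huniq⟩ := h n
    simp only [Nat.count_succ, ih, sum_add_distrib, add_right_inj]
    rw [sum_eq_single i (fun j _ hj => if_neg fun hP => hj (huniq j hP.2)) (by simp)]
    simp [hi]

variable (n : ℕ) (a g : ι → ℕ)

def classCount (D : ℕ) (i : ι) (x : ℕ) : ℚ :=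
  Nat.count (fun y => y ≡ x [MOD D] ∧ y ≡ a i [MOD g i]) n

def classSpan (D : ℕ) : Submodule ℚ (ℕ → ℚ) :=
  Submodule.span ℚ (Set.range (classCount n a g D))

instance [Finite ι] (D : ℕ) : FiniteDimensional ℚ (classSpan n a g D) :=
  FiniteDimensional.span_of_finite ℚ (Set.finite_range _)

def residueSum (D : ℕ) : (ℕ → ℚ) →ₗ[ℚ] ℕ → ℚ where
  toFun f x := ∑ y ∈ range n with y ≡ x [MOD D], f y
  map_add' f f' := by funext x; simp [sum_add_distrib]
  map_smul' c f := by funext x; simp [mul_sum]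

/-- `q ∣ g i ∧ a i ≡ r [MOD q]` says that class `i` is contained in `r + q ℕ`. -/
def containedSum [Fintype ι] (D q r : ℕ) : ℕ → ℚ :=
  ∑ i with q ∣ g i ∧ a i ≡ r [MOD q], classCount n a g D i

variable {n a g}

theorem classCount_self_pos (hn : 0 < n) {D : ℕ} (hD : D ∣ n) {i : ι} (hi : g i ∣ n) :
    0 < classCount n a g D i (a i) := by
  have hmod := Nat.mod_modEq (a i) n
  have hpos : 0 < Nat.count (fun y => y ≡ a i [MOD D] ∧ y ≡ a i [MOD g i]) n := by
    rw [Nat.count_eq_card_filter_range]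
    exact card_pos.mpr ⟨a i % n,
      mem_filter.mpr ⟨mem_range.mpr (Nat.mod_lt _ hn), hmod.of_dvd hD, hmod.of_dvd hi⟩⟩
  exact Nat.cast_pos.mpr hpos

theorem count_class_inter_residue {D q r x : ℕ} {i : ι} (hq : q ∣ g i) :
    Nat.count (fun y => (y ≡ x [MOD D] ∧ y ≡ r [MOD q]) ∧ y ≡ a i [MOD g i]) n =
      if a i ≡ r [MOD q] then Nat.count (fun y => y ≡ x [MOD D] ∧ y ≡ a i [MOD g i]) n else 0 := by
  split_ifs with hr
  · simp only [Nat.count_eq_card_filter_range]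
    refine congrArg _ (filter_congr fun y _ => ?_)
    exact ⟨fun h => ⟨h.1.1, h.2⟩, fun h => ⟨⟨h.1, (h.2.of_dvd hq).trans hr⟩, h.2⟩⟩
  · rw [Nat.count_eq_card_filter_range, card_eq_zero, filter_eq_empty_iff]
    exact fun y _ h => hr ((h.2.of_dvd hq).symm.trans h.1.2)

theorem residueSum_classCount {D D' : ℕ} (hD : D ∣ D') (hD' : D' ∣ n) (hD'0 : 0 < D') (i : ι) :
    residueSum n D (classCount n a g D' i) = ((n / D' : ℕ) : ℚ) • classCount n a g D i := by
  funext x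
  have hinner : ∀ z ∈ range n,
      #{y ∈ range n | y ≡ x [MOD D] ∧ z ≡ y [MOD D'] ∧ z ≡ a i [MOD g i]} =
        if z ≡ x [MOD D] ∧ z ≡ a i [MOD g i] then n / D' else 0 := by
    intro z _
    split_ifs with hz
    · rw [← count_modEq_of_dvd hD'0 hD' z, Nat.count_eq_card_filter_range]
      refine congrArg _ (filter_congr fun y _ => ?_)
      exact ⟨fun h => h.2.1.symm, fun h => ⟨(h.of_dvd hD).trans hz.1, h.symm, hz.2⟩⟩
    · refine card_eq_zero.mpr (filter_eq_empty_iff.mpr fun y _ h => hz ⟨?_, h.2.2⟩)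
      exact (h.2.1.of_dvd hD).trans h.1
  have hcount := sum_card_bipartiteAbove_eq_sum_card_bipartiteBelow
    (s := {y ∈ range n | y ≡ x [MOD D]}) (t := range n)
    (fun y z => z ≡ y [MOD D'] ∧ z ≡ a i [MOD g i])
  simp only [Finset.bipartiteAbove, Finset.bipartiteBelow, filter_filter] at hcount
  simp only [residueSum, classCount, LinearMap.coe_mk, AddHom.coe_mk, Pi.smul_apply, smul_eq_mul,
    Nat.count_eq_card_filter_range]
  rw [← Nat.cast_sum, hcount, sum_congr rfl hinner, ← sum_filter, sum_const, smul_eq_mul,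
    Nat.cast_mul, mul_comm]

theorem map_residueSum_classSpan (hn : 0 < n) {D D' : ℕ} (hD : D ∣ D') (hD' : D' ∣ n)
    (hD'0 : 0 < D') :
    (classSpan n a g D').map (residueSum n D) = classSpan n a g D := by
  have hc : ((n / D' : ℕ) : ℚ) ≠ 0 :=
    Nat.cast_ne_zero.mpr (Nat.div_pos (Nat.le_of_dvd hn hD') hD'0).ne'
  rw [classSpan, classSpan, Submodule.map_span, ← Set.range_comp,
    ← Submodule.span_smul_eq_of_isUnit (Set.range (classCount n a g D)) _ hc.isUnit,
    Set.smul_set_range]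
  exact congrArg _ (congrArg Set.range (funext (residueSum_classCount hD hD' hD'0)))

theorem one_le_finrank_classSpan_one [Finite ι] (hcov : IsExactCover a g) (hn : 0 < n)
    (hg : ∀ i, g i ∣ n) : 1 ≤ finrank ℚ (classSpan n a g 1) := by
  obtain ⟨i, -⟩ := hcov 0
  refine Submodule.one_le_finrank_iff.mpr fun hbot => ?_
  have hi : classCount n a g 1 i ∈ classSpan n a g 1 := Submodule.subset_span ⟨i, rfl⟩
  rw [hbot, Submodule.mem_bot] at hi
  exact (classCount_self_pos hn (one_dvd n) (hg i)).ne' (congrFun hi (a i))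

variable [Fintype ι]

theorem containedSum_mem_classSpan (D q r : ℕ) : containedSum n a g D q r ∈ classSpan n a g D :=
  Submodule.sum_mem _ fun i _ => Submodule.subset_span ⟨i, rfl⟩

theorem residueSum_containedSum {D D' : ℕ} (hD : D ∣ D') (hD' : D' ∣ n) (hD'0 : 0 < D')
    (q r : ℕ) :
    residueSum n D (containedSum n a g D' q r) = ((n / D' : ℕ) : ℚ) • containedSum n a g D q r := by
  simp only [containedSum, map_sum, residueSum_classCount hD hD' hD'0, smul_sum]

theorem containedSum_apply_eq_zero {D q r x : ℕ} (hq : q ∣ D) (hx : ¬ x ≡ r [MOD q]) :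
    containedSum n a g D q r x = 0 := by
  rw [containedSum, Finset.sum_apply]
  refine sum_eq_zero fun i hi => ?_
  rw [mem_filter] at hi
  rw [classCount, Nat.count_eq_card_filter_range]
  refine Nat.cast_eq_zero.mpr (card_eq_zero.mpr (filter_eq_empty_iff.mpr fun y _ hy => hx ?_))
  exact ((hy.1.of_dvd hq).symm.trans (hy.2.of_dvd hi.2.1)).trans hi.2.2

theorem containedSum_self_pos (hn : 0 < n) {D q : ℕ} (hD : D ∣ n) (hg : ∀ i, g i ∣ n) {c : ι}
    (hc : q ∣ g c) : 0 < containedSum n a g D q (a c) (a c) := by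
  rw [containedSum, Finset.sum_apply]
  refine sum_pos' (fun i _ => Nat.cast_nonneg _) ⟨c, ?_, classCount_self_pos hn hD (hg c)⟩
  exact mem_filter.mpr ⟨mem_univ c, hc, Nat.ModEq.refl _⟩

/-- The classes whose modulus `q` does not divide are invariant under the shift by `s`, and so is
the part of `x + D ℕ` inside `r + q ℕ`; hence so is what remains, the classes contained in
`r + q ℕ`. -/
theorem IsExactCover.containedSum_add (hcov : IsExactCover a g) {D q s : ℕ} (hDn : D ∣ n)
    (hqn : q ∣ n) (hg : ∀ i, g i ∣ n) (hDs : D ∣ s) (hgs : ∀ i, ¬ q ∣ g i → g i ∣ s) (r : ℕ) :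
    containedSum n a g D q (r + s) = containedSum n a g D q r := by
  funext x
  have hsplit (r : ℕ) : (Nat.count (fun y => y ≡ x [MOD D] ∧ y ≡ r [MOD q]) n : ℚ) =
      containedSum n a g D q r x + ∑ i with ¬ q ∣ g i,
        (Nat.count (fun y => (y ≡ x [MOD D] ∧ y ≡ r [MOD q]) ∧ y ≡ a i [MOD g i]) n : ℚ) := by
    rw [hcov.count_eq_sum, Nat.cast_sum, ← sum_filter_add_sum_filter_not univ (q ∣ g ·)]
    congr 1
    rw [containedSum, Finset.sum_apply, ← filter_filter, sum_filter (fun i => a i ≡ r [MOD q])]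
    refine sum_congr rfl fun i hi => ?_
    rw [count_class_inter_residue (mem_filter.mp hi).2]
    split_ifs <;> simp [classCount]
  have hshift (r y : ℕ) : (y + s ≡ x [MOD D] ∧ y + s ≡ r + s [MOD q]) ↔
      (y ≡ x [MOD D] ∧ y ≡ r [MOD q]) :=
    and_congr (modEq_add_iff_of_dvd hDs y x) ⟨Nat.ModEq.add_right_cancel' s, Nat.ModEq.add_right s⟩
  have htotal : Nat.count (fun y => y ≡ x [MOD D] ∧ y ≡ r + s [MOD q]) n =
      Nat.count (fun y => y ≡ x [MOD D] ∧ y ≡ r [MOD q]) n :=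
    count_eq_count_of_shift (fun y => by
      simp only [modEq_add_iff_of_dvd hDn, modEq_add_iff_of_dvd hqn]) (hshift r)
  have hclass (i : ι) (hi : ¬ q ∣ g i) :
      Nat.count (fun y => (y ≡ x [MOD D] ∧ y ≡ r + s [MOD q]) ∧ y ≡ a i [MOD g i]) n =
        Nat.count (fun y => (y ≡ x [MOD D] ∧ y ≡ r [MOD q]) ∧ y ≡ a i [MOD g i]) n :=
    count_eq_count_of_shift (fun y => by
      simp only [modEq_add_iff_of_dvd hDn, modEq_add_iff_of_dvd hqn, modEq_add_iff_of_dvd (hg i)])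
      fun y => and_congr (hshift r y) (modEq_add_iff_of_dvd (hgs i hi) y _)
  have h₁ := hsplit (r + s)
  have h₂ := hsplit r
  rw [htotal, sum_congr rfl fun i hi => congrArg Nat.cast (hclass i (mem_filter.mp hi).2)] at h₁
  linarith

theorem IsExactCover.finrank_classSpan_add_le (hcov : IsExactCover a g) (hn : 0 < n)
    (hg : ∀ i, g i ∣ n) {p D : ℕ} (hp : p.Prime) (hD : p * D ∣ n) {c : ι}
    (hc : p ^ (D.factorization p + 1) ∣ g c) :
    finrank ℚ (classSpan n a g D) + (p - 1) ≤ finrank ℚ (classSpan n a g (p * D)) := by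
  set u := D.factorization p
  set q := p ^ (u + 1)
  set s := p ^ u * ordCompl[p] n
  have hpD : 0 < p * D := Nat.pos_of_dvd_of_pos hD hn
  have hDn : D ∣ n := (dvd_mul_left D p).trans hD
  have hqpD : q ∣ p * D := by
    rw [show q = p * p ^ u from pow_succ' p u]
    exact mul_dvd_mul_left p (Nat.ordProj_dvd D p)
  have hshift (t : ℕ) : containedSum n a g D q (a c + t * s) = containedSum n a g D q (a c) := by
    refine hcov.containedSum_add hDn (hqpD.trans hD) hg
      ((dvd_pow_mul_ordCompl hDn le_rfl).mul_left t)
      (fun i hi => (dvd_pow_mul_ordCompl (hg i) ?_).mul_left t) _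
    by_contra hlt
    exact hi ((hp.pow_dvd_iff_le_factorization (Nat.pos_of_dvd_of_pos (hg i) hn).ne').mpr
      (by omega))
  set γ : ℕ → ℕ → ℚ := fun t => containedSum n a g (p * D) q (a c + t * s)
  have hγ (t : ℕ) :
      residueSum n D (γ t) = ((n / (p * D) : ℕ) : ℚ) • containedSum n a g D q (a c) := by
    rw [residueSum_containedSum (dvd_mul_left D p) hD hpD, hshift]
  have hγ_ne (t : ℕ) : γ t ≠ 0 := by
    intro h
    have h₀ := congrFun (hγ t) (a c)
    rw [h, map_zero, Pi.zero_apply, Pi.smul_apply, smul_eq_mul, eq_comm, mul_eq_zero] at h₀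
    exact h₀.elim (Nat.cast_ne_zero.mpr (Nat.div_pos (Nat.le_of_dvd hn hD) hpD).ne')
      (containedSum_self_pos hn hDn hg hc).ne'
  choose x hx using fun t => Function.ne_iff.mp (hγ_ne t)
  have hxρ (t : ℕ) : x t ≡ a c + t * s [MOD q] :=
    by_contra fun h => hx t (containedSum_apply_eq_zero hqpD h)
  have hind : LinearIndependent ℚ (fun j : Fin (p - 1) => γ (j + 1) - γ 0) :=
    linearIndependent_sub_of_apply (fun j _ => hx j) fun i hi j hj hij =>
      containedSum_apply_eq_zero hqpD fun h => hij (eq_of_add_mul_pow_mul_ordCompl_modEq hp hn.ne'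
        (by omega) (by omega) ((hxρ j).symm.trans h)).symm
  refine map_residueSum_classSpan (a := a) (g := g) hn (dvd_mul_left D p) hD hpD ▸
    finrank_map_add_le_of_linearIndependent _ _ hind (fun j => ?_) fun j => ?_
  · exact sub_mem (containedSum_mem_classSpan _ _ _) (containedSum_mem_classSpan _ _ _)
  · simp only [γ, map_sub, hγ, sub_self]

/-- Each prime factor `p` of `D` adds `p - 1 ≥ log₂ p` to the dimension. -/
theorem IsExactCover.two_mul_le_two_pow_finrank (hcov : IsExactCover a g) (hn : 0 < n)
    (hg : ∀ i, g i ∣ n) (htop : ∀ p k, p.Prime → p ^ (k + 1) ∣ n → ∃ i, p ^ (k + 1) ∣ g i)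
    {D : ℕ} (hD : D ∣ n) : 2 * D ≤ 2 ^ finrank ℚ (classSpan n a g D) := by
  induction D using UniqueFactorizationMonoid.induction_on_prime with
  | h₁ => simp
  | h₂ D hD₁ =>
    rw [Nat.isUnit_iff.mp hD₁, mul_one]
    exact (pow_one 2).symm.le.trans
      (Nat.pow_le_pow_right two_pos (one_le_finrank_classSpan_one hcov hn hg))
  | h₃ D p _ hp ih =>
    rw [← Nat.prime_iff] at hp
    obtain ⟨c, hc⟩ :=
      htop p _ hp ((pow_succ' p _ ▸ mul_dvd_mul_left p (Nat.ordProj_dvd D p)).trans hD)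
    have hp_le : p ≤ 2 ^ (p - 1) := by
      have := @Nat.lt_two_pow_self (p - 1)
      have := hp.two_le
      omega
    calc 2 * (p * D) = p * (2 * D) := by ring
      _ ≤ 2 ^ (p - 1) * 2 ^ finrank ℚ (classSpan n a g D) :=
        Nat.mul_le_mul hp_le (ih ((dvd_mul_left D p).trans hD))
      _ = 2 ^ (finrank ℚ (classSpan n a g D) + (p - 1)) := by rw [← pow_add, add_comm]
      _ ≤ 2 ^ finrank ℚ (classSpan n a g (p * D)) :=
        Nat.pow_le_pow_right two_pos (hcov.finrank_classSpan_add_le hn hg hp hD hc)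

theorem exists_pow_succ_dvd_of_dvd_lcm (hg : ∀ i, g i ≠ 0) {p k : ℕ} (hp : p.Prime)
    (h : p ^ (k + 1) ∣ univ.lcm g) : ∃ i, p ^ (k + 1) ∣ g i := by
  rw [hp.pow_dvd_iff_le_factorization (lcm_ne_zero_iff.mpr fun i _ => hg i),
    Finset.factorization_lcm (fun i _ => hg i), Finset.le_sup_iff (by simp)] at h
  obtain ⟨i, -, hi⟩ := h
  exact ⟨i, (hp.pow_dvd_iff_le_factorization (hg i)).mpr hi⟩

theorem IsExactCover.lcm_le (hcov : IsExactCover a g) :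
    univ.lcm g ≤ 2 ^ (Fintype.card ι - 1) := by
  by_cases h0 : ∃ i, g i = 0
  · obtain ⟨i, hi⟩ := h0
    simp [Finset.lcm_eq_zero_iff.mpr ⟨i, mem_univ i, hi⟩]
  push Not at h0
  have h₁ := hcov.two_mul_le_two_pow_finrank
    (Nat.pos_of_ne_zero (lcm_ne_zero_iff.mpr fun i _ => h0 i)) (fun i => dvd_lcm (mem_univ i))
    (fun p k hp => exists_pow_succ_dvd_of_dvd_lcm h0 hp) dvd_rfl
  have h₂ : 2 ^ finrank ℚ (classSpan (univ.lcm g) a g (univ.lcm g)) ≤ 2 ^ Fintype.card ι :=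
    Nat.pow_le_pow_right two_pos (finrank_range_le_card _)
  have h₃ : 2 ^ Fintype.card ι ≤ 2 * 2 ^ (Fintype.card ι - 1) := by
    rw [← pow_succ']
    exact Nat.pow_le_pow_right two_pos (by omega)
  omega

end ExactCover

section ConstantGap

variable {A : Type*} {y : ℕ → A}

theorem apply_eq_iff_of_gap {c : A} {g m : ℕ} (hg : 0 < g)
    (hstep : ∀ n, y n = c → y (n + g) = c ∧ ∀ t, 0 < t → t < g → y (n + t) ≠ c) (hm : y m = c)
    {x : ℕ} (hx : m ≤ x) : y x = c ↔ x ≡ m [MOD g] := by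
  have hmul (k : ℕ) : y (m + g * k) = c := by
    induction k with
    | zero => simpa using hm
    | succ k ih => simpa [mul_add, ← add_assoc] using (hstep _ ih).1
  rw [Nat.ModEq.comm, Nat.modEq_iff_dvd' hx]
  obtain ⟨k, r, hr, rfl⟩ : ∃ k r, r < g ∧ x = m + g * k + r :=
    ⟨(x - m) / g, (x - m) % g, Nat.mod_lt _ hg, by have := Nat.div_add_mod (x - m) g; omega⟩
  rw [show m + g * k + r - m = g * k + r by omega, Nat.dvd_add_right (dvd_mul_right g k)]
  rcases Nat.eq_zero_or_pos r with rfl | hr0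
  · simpa using hmul k
  · exact iff_of_false ((hstep _ (hmul k)).2 r hr0 hr) fun h => (Nat.le_of_dvd hr0 h).not_gt hr

/-- A priori a letter fills its residue class only from its first occurrence on; the periodicity
of `y` extends this to all of `ℕ`. -/
theorem IsConstantGap.exists_residues [Finite A] (hy : IsConstantGap y) :
    ∃ a g : {c // ∃ n, y n = c} → ℕ, (∀ i, 0 < g i) ∧
      ∀ x (i : {c // ∃ n, y n = c}), y x = i ↔ x ≡ a i [MOD g i] := by
  classical
  choose gap hgap hstep using hy
  have := Fintype.ofFinite {c // ∃ n, y n = c}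
  let a (i : {c // ∃ n, y n = c}) : ℕ := Nat.find i.2
  let g (i : {c // ∃ n, y n = c}) : ℕ := gap i i.2
  have hev (x : ℕ) (i : {c // ∃ n, y n = c}) : y x = i ↔ a i ≤ x ∧ x ≡ a i [MOD g i] := by
    by_cases hx : a i ≤ x
    · rw [apply_eq_iff_of_gap (hgap i i.2) (hstep i i.2) (Nat.find_spec i.2) hx]
      exact (and_iff_right hx).symm
    · exact iff_of_false (Nat.find_min i.2 (not_le.mp hx)) fun h => hx h.1
  have hper : Function.Periodic y (univ.lcm g) := fun x => by
    obtain ⟨hle, hmod⟩ := (hev x ⟨y x, x, rfl⟩).mp rfl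
    exact (hev _ ⟨y x, x, rfl⟩).mpr
      ⟨by omega, (modEq_add_iff_of_dvd (dvd_lcm (mem_univ _)) x _).mpr hmod⟩
  refine ⟨a, g, fun i => hgap i i.2, fun x i => ⟨fun h => ((hev x i).mp h).2, fun h => ?_⟩⟩
  have hN : 0 < univ.lcm g := Nat.pos_of_ne_zero (lcm_ne_zero_iff.mpr fun i _ => (hgap i i.2).ne')
  rw [← hper.nat_mul (a i) x]
  refine (hev _ i).mpr ⟨le_add_left (Nat.le_mul_of_pos_right _ hN), ?_⟩
  exact (modEq_add_iff_of_dvd ((dvd_lcm (mem_univ i)).mul_left _) x _).mpr h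

end ConstantGap

/-- Every constant gap sequence over an alphabet of `d`
letters has minimal period at most `2^(d−1)`. -/
theorem minPeriod_constantGap_le
    {A : Type*} [Fintype A] (d : ℕ) (hd : Fintype.card A = d)
    (y : ℕ → A) (hy : IsConstantGap y) :
    minPeriod y ≤ 2 ^ (d - 1) := by
  classical
  obtain ⟨a, g, hg, hcls⟩ := hy.exists_residues
  have hcov : IsExactCover a g := fun x =>
    ⟨⟨y x, x, rfl⟩, (hcls x _).mp rfl, fun i hi => Subtype.ext ((hcls x i).mpr hi).symm⟩
  have hper (x : ℕ) : y (x + univ.lcm g) = y x :=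
    (hcls _ ⟨y x, x, rfl⟩).mpr
      ((modEq_add_iff_of_dvd (dvd_lcm (mem_univ _)) x _).mpr ((hcls x _).mp rfl))
  calc minPeriod y ≤ univ.lcm g :=
        Nat.sInf_le ⟨Nat.pos_of_ne_zero (lcm_ne_zero_iff.mpr fun i _ => (hg i).ne'), hper⟩
    _ ≤ 2 ^ (Fintype.card {c // ∃ n, y n = c} - 1) := hcov.lcm_le
    _ ≤ 2 ^ (d - 1) :=
      Nat.pow_le_pow_right two_pos (Nat.sub_le_sub_right (hd ▸ Fintype.card_subtype_le _) 1)

end Paper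
end

section
/- Let P, P′ be positive integers, H = gcd(P, P′), P = HY, P′ = HY′. Let A ∈ ℤ^{2×2} be unimodular and ℓ, k ∈ ℤ. Then A·(ℓ, k)ᵀ ≡ (0, 0)ᵀ (first entry mod P, second entry mod P′) if and only if there exist λ, κ ∈ ℤ such that (ℓ, k)ᵀ = H·(λ, κ)ᵀ and A·(λ, κ)ᵀ ≡ (0, 0)ᵀ (first entry mod Y, second entry mod Y′). -/
open Filter Topology Matrix
open scoped ENNReal

theorem Matrix.forall_mul_dvd_mulVec_iff_exists_smul {n R : Type*} [Fintype n]
    [DecidableEq n] [CommRing R] {M : Matrix n n R} (hM : IsUnit M.det) (H : R) (d v : n → R) :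
    (∀ i, H * d i ∣ (M *ᵥ v) i) ↔ ∃ w, v = H • w ∧ ∀ i, d i ∣ (M *ᵥ w) i := by
  constructor
  · intro h
    choose c hc using h
    -- Pulling `(d i * c i)ᵢ` back through `M` avoids cancelling `H`, which may be zero.
    have hq : H • (fun i => d i * c i) = M *ᵥ v := funext fun i => by simp [hc, mul_assoc]
    refine ⟨M⁻¹ *ᵥ fun i => d i * c i, ?_, fun i => ?_⟩
    · rw [← mulVec_smul, hq, mulVec_mulVec, nonsing_inv_mul M hM, one_mulVec]
    · rw [mulVec_mulVec, mul_nonsing_inv M hM, one_mulVec]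
      exact dvd_mul_right _ _
  · rintro ⟨w, rfl, hw⟩ i
    rw [mulVec_smul, Pi.smul_apply, smul_eq_mul]
    exact mul_dvd_mul_left H (hw i)

namespace Paper

theorem unimodular_congruence_factor_gcd_general
    (P P' H Y Y' : ℕ) (hY : P = H * Y) (hY' : P' = H * Y')
    (M : Matrix (Fin 2) (Fin 2) ℤ) (hM : M.det = 1 ∨ M.det = -1)
    (l k : ℤ) :
    ((P : ℤ) ∣ (M 0 0 * l + M 0 1 * k) ∧ (P' : ℤ) ∣ (M 1 0 * l + M 1 1 * k)) ↔
    (∃ lam kap : ℤ, l = (H : ℤ) * lam ∧ k = (H : ℤ) * kap ∧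
      (Y : ℤ) ∣ (M 0 0 * lam + M 0 1 * kap) ∧
      (Y' : ℤ) ∣ (M 1 0 * lam + M 1 1 * kap)) := by
  have key := M.forall_mul_dvd_mulVec_iff_exists_smul (Int.isUnit_iff.mpr hM) H ![Y, Y'] ![l, k]
  subst hY hY'
  push_cast
  simpa [Fin.forall_fin_two, Fin.exists_fin_succ_pi, mulVec_fin_two, funext_iff, and_assoc]
    using key

/-- Let `P, P'` be positive integers, `H = gcd(P, P')`,
`P = H·Y`, `P' = H·Y'`, and `M` a unimodular integer `2×2` matrix. Then
`M·(l, k)ᵀ ≡ (0,0)ᵀ mod (P, P')ᵀ` iff `(l, k)ᵀ = H·(lam, kap)ᵀ` for some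
integers `lam, kap` with `M·(lam, kap)ᵀ ≡ (0,0)ᵀ mod (Y, Y')ᵀ`. -/
theorem unimodular_congruence_factor_gcd
    (P P' H Y Y' : ℕ) (hP : 0 < P) (hP' : 0 < P')
    (hH : H = Nat.gcd P P') (hY : P = H * Y) (hY' : P' = H * Y')
    (M : Matrix (Fin 2) (Fin 2) ℤ) (hM : M.det = 1 ∨ M.det = -1)
    (l k : ℤ) :
    ((P : ℤ) ∣ (M 0 0 * l + M 0 1 * k) ∧ (P' : ℤ) ∣ (M 1 0 * l + M 1 1 * k)) ↔
    (∃ lam kap : ℤ, l = (H : ℤ) * lam ∧ k = (H : ℤ) * kap ∧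
      (Y : ℤ) ∣ (M 0 0 * lam + M 0 1 * kap) ∧
      (Y' : ℤ) ∣ (M 1 0 * lam + M 1 1 * kap)) :=
  unimodular_congruence_factor_gcd_general P P' H Y Y' hY hY' M hM l k

end Paper
end
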